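/- arXiv:2507.07917 — 5 statements merged into one kernel-verified Lean document; each statement's English description precedes it below -/
import Mathlib

section
/- Let φ : ℝ → ℝ₊ ∪ {+∞} be a proper, convex, lower semicontinuous entropy function with φ(1) = 0 which is superlinear (φ(s)/s → +∞ as s → +∞), and let q ∈ ℝ^{X⊔Y} be a nonnegative vector with q_{z₀} = 0 for some index z₀ ∈ X ⊔ Y. Define F*(η) = Σ_{z : q_z > 0} q_z φ*(η_z), where φ* is the Fenchel conjugate of φ, and K_t(ξ) = F*(−ξ) + (1/t) Σ_{(x,y)∈X×Y} exp(t(φ_x + ψ_y − c(x,y))) for ξ = (φ,ψ) and t > 0. Then for every t > 0 the functional K_t does not attain its infimum: there is no ξ with K_t(ξ) ≤ K_t(ξ') for all ξ'. -/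
open scoped BigOperators
open Filter

noncomputable section

variable {X Y : Type*}

/-- The marginal map `A`. -/
def margA [Fintype X] [Fintype Y] (γ : X × Y → ℝ) : (X → ℝ) × (Y → ℝ) :=
  (fun x => ∑ y, γ (x, y), fun y => ∑ x, γ (x, y))

/-- The adjoint map `A*`. -/
def adjA (ξ : (X → ℝ) × (Y → ℝ)) : X × Y → ℝ := fun p => ξ.1 p.1 + ξ.2 p.2


/-- The adjoint map `A*` as a linear map. -/
def adjAlin (X Y : Type*) : ((X → ℝ) × (Y → ℝ)) →ₗ[ℝ] (X × Y → ℝ) where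
  toFun ξ := fun p => ξ.1 p.1 + ξ.2 p.2
  map_add' u v := by
    funext p
    show (u.1 + v.1) p.1 + (u.2 + v.2) p.2 = _
    simp [Pi.add_apply]
    ring
  map_smul' a v := by
    funext p
    show (a • v.1) p.1 + (a • v.2) p.2 = _
    simp [Pi.smul_apply, smul_eq_mul]
    ring

/-- Inner product on `ℝ^{X×Y}`. -/
def dotP [Fintype X] [Fintype Y] (c γ : X × Y → ℝ) : ℝ := ∑ p, c p * γ p

/-- Inner product on `ℝ^X ⊕ ℝ^Y`. -/
def dotE [Fintype X] [Fintype Y] (u v : (X → ℝ) × (Y → ℝ)) : ℝ :=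
  ∑ x, u.1 x * v.1 x + ∑ y, u.2 y * v.2 y

/-- The discrete entropy. -/
def ent [Fintype X] [Fintype Y] (γ : X × Y → ℝ) : EReal :=
  if ∀ p, 0 ≤ γ p then (((∑ p, γ p * (Real.log (γ p) - 1)) : ℝ) : EReal) else ⊤

/-- Fenchel conjugate of an `EReal`-valued function. -/
def conj [Fintype X] [Fintype Y] (F : (X → ℝ) × (Y → ℝ) → EReal)
    (ξ : (X → ℝ) × (Y → ℝ)) : EReal :=
  ⨆ v, ((dotE v ξ : ℝ) : EReal) - F v

/-- The regularized primal functional `C_t`. -/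
def Ct [Fintype X] [Fintype Y] (F : (X → ℝ) × (Y → ℝ) → EReal) (c : X × Y → ℝ)
    (t : ℝ) (γ : X × Y → ℝ) : EReal :=
  ((dotP c γ : ℝ) : EReal) + F (margA γ) + ((1 / t : ℝ) : EReal) * ent γ

/-- The regularized dual functional `K_t` (`EReal`-valued version). -/
def KtE [Fintype X] [Fintype Y] (F : (X → ℝ) × (Y → ℝ) → EReal) (c : X × Y → ℝ)
    (t : ℝ) (ξ : (X → ℝ) × (Y → ℝ)) : EReal :=
  conj F (-ξ) + (((1 / t) * ∑ p, Real.exp (t * (adjA ξ p - c p)) : ℝ) : EReal)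

/-- The regularized dual functional `K_t` (real-valued version, for a real-valued `F*`). -/
def KtR [Fintype X] [Fintype Y] (Fs : (X → ℝ) × (Y → ℝ) → ℝ) (c : X × Y → ℝ)
    (t : ℝ) (ξ : (X → ℝ) × (Y → ℝ)) : ℝ :=
  Fs (-ξ) + (1 / t) * ∑ p, Real.exp (t * (adjA ξ p - c p))

/-- (H1): `F` proper, convex, lower semicontinuous. -/
def H1 (F : (X → ℝ) × (Y → ℝ) → EReal) : Prop :=
  (∀ v, F v ≠ ⊥) ∧ (∃ v, F v ≠ ⊤) ∧
  (∀ v w : (X → ℝ) × (Y → ℝ), ∀ a b : ℝ, 0 ≤ a → 0 ≤ b → a + b = 1 →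
    F (a • v + b • w) ≤ (a : EReal) * F v + (b : EReal) * F w) ∧
  LowerSemicontinuous F

/-- (H2): there is a strictly positive point in the domain of `F`. -/
def H2 (F : (X → ℝ) × (Y → ℝ) → EReal) : Prop :=
  ∃ v : (X → ℝ) × (Y → ℝ), (∀ x, 0 < v.1 x) ∧ (∀ y, 0 < v.2 y) ∧ F v ≠ ⊤

/-- (H3): `F` is superlinear at infinity. -/
def H3 [Fintype X] [Fintype Y] (F : (X → ℝ) × (Y → ℝ) → EReal) : Prop :=
  ∀ M : ℝ, ∃ R : ℝ, ∀ v, R ≤ ‖v‖ → ((M * ‖v‖ : ℝ) : EReal) ≤ F v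

/-- (H4): a neighborhood of the origin intersected with the nonnegative orthant
lies in the domain of `F`. -/
def H4 (F : (X → ℝ) × (Y → ℝ) → EReal) : Prop :=
  ∃ W ∈ nhds (0 : (X → ℝ) × (Y → ℝ)),
    ∀ v ∈ W, (∀ x, 0 ≤ v.1 x) → (∀ y, 0 ≤ v.2 y) → F v ≠ ⊤

/-- (H5): strong convexity at every point (for the real-valued conjugate). -/
def H5 [Fintype X] [Fintype Y] (Fs : (X → ℝ) × (Y → ℝ) → ℝ) : Prop :=
  ∀ ξ₀ : (X → ℝ) × (Y → ℝ), ∃ r > (0 : ℝ), ∃ g : (X → ℝ) × (Y → ℝ), ∃ lam > (0 : ℝ),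
    (∀ ξ, Fs ξ₀ + dotE g (ξ - ξ₀) ≤ Fs ξ) ∧
    (∀ ξ, ‖ξ - ξ₀‖ ≤ r → Fs ξ₀ + dotE g (ξ - ξ₀) + lam / 2 * ‖ξ - ξ₀‖ ^ 2 ≤ Fs ξ)

/-- `Fs` is the (real-valued) Fenchel conjugate of `F`. -/
def IsConjOf [Fintype X] [Fintype Y] (F : (X → ℝ) × (Y → ℝ) → EReal)
    (Fs : (X → ℝ) × (Y → ℝ) → ℝ) : Prop :=
  ∀ ξ, (Fs ξ : EReal) = conj F ξ

end
/-- Conjugate of a real entropy function. -/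
noncomputable def phstar (ph : ℝ → EReal) (y : ℝ) : EReal :=
  ⨆ s : ℝ, ((s * y : ℝ) : EReal) - ph s

open Classical in
/-- `F*` built from the entropy function `ph` and the reference vector `q`
(summing only over the indices where `q_z > 0`). -/
noncomputable def Fstar4 {X Y : Type*} [Fintype X] [Fintype Y] (ph : ℝ → EReal)
    (q : X ⊕ Y → ℝ) (ξ : (X → ℝ) × (Y → ℝ)) : EReal :=
  ∑ z : X ⊕ Y, if 0 < q z then (q z : EReal) * phstar ph (Sum.elim ξ.1 ξ.2 z) else 0

/-- The corresponding regularized dual functional. -/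
noncomputable def Kt4 {X Y : Type*} [Fintype X] [Fintype Y] (ph : ℝ → EReal)
    (q : X ⊕ Y → ℝ) (c : X × Y → ℝ) (t : ℝ) (ξ : (X → ℝ) × (Y → ℝ)) : EReal :=
  Fstar4 ph q (-ξ) + (((1 / t) * ∑ p, Real.exp (t * (adjA ξ p - c p)) : ℝ) : EReal)


private lemma ereal_mul_pos_ne_bot {a : ℝ} (ha : 0 < a) {x : EReal} (hx : x ≠ ⊥) :
    (a : EReal) * x ≠ ⊥ := by
  induction x using EReal.rec with
  | bot => exact absurd rfl hx
  | coe r => rw [← EReal.coe_mul]; exact EReal.coe_ne_bot _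
  | top => rw [EReal.coe_mul_top_of_pos ha]; exact top_ne_bot

private lemma phstar_ge (ph : ℝ → EReal) (hph1 : ph 1 = 0) (y : ℝ) :
    ((y : ℝ) : EReal) ≤ phstar ph y := by
  have h := le_iSup (fun s : ℝ => ((s * y : ℝ) : EReal) - ph s) 1
  simpa [phstar, hph1] using h

private lemma phstar_ne_bot (ph : ℝ → EReal) (hph1 : ph 1 = 0) (y : ℝ) :
    phstar ph y ≠ ⊥ :=
  fun h => absurd (h ▸ phstar_ge ph hph1 y) (by simp)

private lemma phstar_zero (ph : ℝ → EReal) (hph0 : ∀ s, 0 ≤ ph s) (hph1 : ph 1 = 0) :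
    phstar ph 0 = 0 := by
  refine le_antisymm (iSup_le fun s => ?_) (by simpa using phstar_ge ph hph1 0)
  have h : ((s * 0 : ℝ) : EReal) = 0 := by norm_num
  rw [h, zero_sub]
  exact EReal.neg_le.mpr (by simpa using hph0 s)

private lemma Fstar4_ne_bot {X Y : Type*} [Fintype X] [Fintype Y] (ph : ℝ → EReal)
    (hph1 : ph 1 = 0) (q : X ⊕ Y → ℝ) (ξ : (X → ℝ) × (Y → ℝ)) :
    Fstar4 ph q ξ ≠ ⊥ := by
  classical
  unfold Fstar4
  refine Finset.sum_induction _ (· ≠ ⊥)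
    (fun a b ha hb h => by rcases EReal.add_eq_bot_iff.1 h with h | h <;> [exact ha h; exact hb h])
    (by simp) (fun z _ => ?_)
  split
  · exact ereal_mul_pos_ne_bot (by assumption) (phstar_ne_bot ph hph1 _)
  · simp

private lemma Fstar4_zero {X Y : Type*} [Fintype X] [Fintype Y] (ph : ℝ → EReal)
    (hph0 : ∀ s, 0 ≤ ph s) (hph1 : ph 1 = 0) (q : X ⊕ Y → ℝ) :
    Fstar4 ph q (0 : (X → ℝ) × (Y → ℝ)) = 0 := by
  classical
  unfold Fstar4
  refine Finset.sum_eq_zero fun z _ => ?_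
  split
  · have h : Sum.elim (0 : (X → ℝ) × (Y → ℝ)).1 (0 : (X → ℝ) × (Y → ℝ)).2 z = 0 := by
      cases z <;> rfl
    rw [h, phstar_zero ph hph0 hph1, mul_zero]
  · rfl


/-- if some entry of `q` vanishes, the regularized dual functional
`K_t` does not attain its infimum. -/
theorem statement4 {X Y : Type*} [Fintype X] [Fintype Y] [Nonempty X] [Nonempty Y]
    (c : X × Y → ℝ) (hc : ∀ p, 0 ≤ c p)
    (ph : ℝ → EReal) (hph0 : ∀ s, 0 ≤ ph s) (hphproper : ∃ s, ph s ≠ ⊤)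
    (hphconv : ∀ s u : ℝ, ∀ a b : ℝ, 0 ≤ a → 0 ≤ b → a + b = 1 →
      ph (a * s + b * u) ≤ (a : EReal) * ph s + (b : EReal) * ph u)
    (hphlsc : LowerSemicontinuous ph) (hph1 : ph 1 = 0)
    (hsuper : ∀ M : ℝ, ∃ R : ℝ, ∀ s : ℝ, R ≤ s → ((M * s : ℝ) : EReal) ≤ ph s)
    (q : X ⊕ Y → ℝ) (hq : ∀ z, 0 ≤ q z) (z₀ : X ⊕ Y) (hz₀ : q z₀ = 0)
    (t : ℝ) (ht : 0 < t) :
    ¬ ∃ ξ : (X → ℝ) × (Y → ℝ), ∀ ξ' : (X → ℝ) × (Y → ℝ),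
        Kt4 ph q c t ξ ≤ Kt4 ph q c t ξ' := by
  classical
  rintro ⟨ξ, hmin⟩
  -- value at 0 is a real number
  set b0 : ℝ := (1 / t) * ∑ p, Real.exp (t * (adjA (0 : (X → ℝ) × (Y → ℝ)) p - c p)) with hb0
  have h0 : Kt4 ph q c t 0 = ((b0 : ℝ) : EReal) := by
    unfold Kt4
    rw [neg_zero, Fstar4_zero ph hph0 hph1 q, zero_add]
  have hne_top : Fstar4 ph q (-ξ) ≠ ⊤ := by
    intro h
    have hle := hmin 0
    rw [h0] at hle
    unfold Kt4 at hle
    rw [h, EReal.top_add_of_ne_bot (EReal.coe_ne_bot _)] at hle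
    exact (EReal.coe_ne_top b0) (top_le_iff.mp hle)
  have hne_bot : Fstar4 ph q (-ξ) ≠ ⊥ := Fstar4_ne_bot ph hph1 q _
  obtain ⟨r, hr⟩ : ∃ r : ℝ, Fstar4 ph q (-ξ) = (r : EReal) :=
    ⟨_, (EReal.coe_toReal hne_top hne_bot).symm⟩
  suffices h : ∃ ξ' : (X → ℝ) × (Y → ℝ),
      (∀ z, 0 < q z → Sum.elim ξ'.1 ξ'.2 z = Sum.elim ξ.1 ξ.2 z) ∧
      (∑ p, Real.exp (t * (adjA ξ' p - c p))) < ∑ p, Real.exp (t * (adjA ξ p - c p)) by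
    obtain ⟨ξ', heq, hlt⟩ := h
    have hF : Fstar4 ph q (-ξ') = Fstar4 ph q (-ξ) := by
      unfold Fstar4
      refine Finset.sum_congr rfl fun z _ => ?_
      by_cases hz : 0 < q z
      · rw [if_pos hz, if_pos hz]
        have he : Sum.elim (-ξ').1 (-ξ').2 z = Sum.elim (-ξ).1 (-ξ).2 z := by
          have h1 := heq z hz
          cases z with
          | inl x =>
            simp only [Sum.elim_inl] at h1 ⊢
            show -(ξ'.1 x) = -(ξ.1 x)
            rw [h1]
          | inr y =>
            simp only [Sum.elim_inr] at h1 ⊢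
            show -(ξ'.2 y) = -(ξ.2 y)
            rw [h1]
        rw [he]
      · rw [if_neg hz, if_neg hz]
    have hlt' : Kt4 ph q c t ξ' < Kt4 ph q c t ξ := by
      unfold Kt4
      rw [hF, hr, ← EReal.coe_add, ← EReal.coe_add]
      have : r + 1 / t * ∑ p, Real.exp (t * (adjA ξ' p - c p)) <
          r + 1 / t * ∑ p, Real.exp (t * (adjA ξ p - c p)) := by
        have h1t : (0 : ℝ) < 1 / t := by positivity
        nlinarith [mul_lt_mul_of_pos_left hlt h1t]
      exact_mod_cast this
    exact absurd (hmin ξ') (not_le.mpr hlt')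
  -- construct the perturbation by decreasing the z₀ coordinate
  cases z₀ with
  | inl x₀ =>
    refine ⟨(Function.update ξ.1 x₀ (ξ.1 x₀ - 1), ξ.2), fun z hz => ?_, ?_⟩
    · cases z with
      | inl x =>
        have hxx : x ≠ x₀ := fun h => by rw [h, hz₀] at hz; exact lt_irrefl 0 hz
        simp [Function.update_of_ne hxx]
      | inr y => rfl
    · refine Finset.sum_lt_sum (fun p _ => ?_) ⟨(x₀, Classical.arbitrary Y), Finset.mem_univ _, ?_⟩
      · apply Real.exp_le_exp.2
        apply mul_le_mul_of_nonneg_left _ ht.le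
        apply sub_le_sub_right
        show Function.update ξ.1 x₀ (ξ.1 x₀ - 1) p.1 + ξ.2 p.2 ≤ ξ.1 p.1 + ξ.2 p.2
        apply add_le_add_left
        by_cases hp : p.1 = x₀
        · rw [hp, Function.update_self]; linarith
        · rw [Function.update_of_ne hp]
      · apply Real.exp_lt_exp.2
        apply mul_lt_mul_of_pos_left _ ht
        apply sub_lt_sub_right
        show Function.update ξ.1 x₀ (ξ.1 x₀ - 1) x₀ + ξ.2 _ < ξ.1 x₀ + ξ.2 _
        rw [Function.update_self]
        apply add_lt_add_left
        linarith
  | inr y₀ =>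
    refine ⟨(ξ.1, Function.update ξ.2 y₀ (ξ.2 y₀ - 1)), fun z hz => ?_, ?_⟩
    · cases z with
      | inl x => rfl
      | inr y =>
        have hyy : y ≠ y₀ := fun h => by rw [h, hz₀] at hz; exact lt_irrefl 0 hz
        simp [Function.update_of_ne hyy]
    · refine Finset.sum_lt_sum (fun p _ => ?_) ⟨(Classical.arbitrary X, y₀), Finset.mem_univ _, ?_⟩
      · apply Real.exp_le_exp.2
        apply mul_le_mul_of_nonneg_left _ ht.le
        apply sub_le_sub_right
        show ξ.1 p.1 + Function.update ξ.2 y₀ (ξ.2 y₀ - 1) p.2 ≤ ξ.1 p.1 + ξ.2 p.2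
        apply add_le_add_right
        by_cases hp : p.2 = y₀
        · rw [hp, Function.update_self]; linarith
        · rw [Function.update_of_ne hp]
      · apply Real.exp_lt_exp.2
        apply mul_lt_mul_of_pos_left _ ht
        apply sub_lt_sub_right
        show ξ.1 _ + Function.update ξ.2 y₀ (ξ.2 y₀ - 1) y₀ < ξ.1 _ + ξ.2 y₀
        rw [Function.update_self]
        apply add_lt_add_right
        linarith
end

section
/- Assume (H1) and (H2) and let t > 0. If γ_t is the unique minimizer of C_t over ℝ^{X×Y} and ξ_t is any minimizer of K_t over ℝ^X ⊕ ℝ^Y, then γ_t(x,y) = exp(t((A*ξ_t)_{x,y} − c(x,y))) for every (x,y) ∈ X×Y. -/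
open scoped BigOperators
open Filter

noncomputable section AuxLemmas

variable {X Y : Type*} [Fintype X] [Fintype Y]

lemma dotE_add_right (u v w : (X → ℝ) × (Y → ℝ)) :
    dotE u (v + w) = dotE u v + dotE u w := by
  simp only [dotE, Prod.fst_add, Prod.snd_add, Pi.add_apply, mul_add,
    Finset.sum_add_distrib]
  ring

lemma dotE_smul_right (a : ℝ) (u v : (X → ℝ) × (Y → ℝ)) :
    dotE u (a • v) = a * dotE u v := by
  simp only [dotE, Prod.smul_fst, Prod.smul_snd, Pi.smul_apply, smul_eq_mul,
    Finset.mul_sum, mul_add]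
  congr 1 <;> (apply Finset.sum_congr rfl; intro x _; ring)

lemma dotE_neg_right (u v : (X → ℝ) × (Y → ℝ)) :
    dotE u (-v) = - dotE u v := by
  have : (-v : (X → ℝ) × (Y → ℝ)) = (-1 : ℝ) • v := by
    simp
  rw [this, dotE_smul_right]; ring

/-- Adjointness of `margA` and `adjA`. -/
lemma dotE_margA (γ : X × Y → ℝ) (ξ : (X → ℝ) × (Y → ℝ)) :
    dotE (margA γ) ξ = ∑ p : X × Y, adjA ξ p * γ p := by
  simp only [dotE, margA, adjA]
  rw [Fintype.sum_prod_type]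
  have h1 : ∀ x : X, (∑ y, γ (x, y)) * ξ.1 x = ∑ y, ξ.1 x * γ (x, y) := by
    intro x; rw [Finset.sum_mul]; apply Finset.sum_congr rfl; intro y _; ring
  have h2 : ∀ y : Y, (∑ x, γ (x, y)) * ξ.2 y = ∑ x, ξ.2 y * γ (x, y) := by
    intro y; rw [Finset.sum_mul]; apply Finset.sum_congr rfl; intro x _; ring
  simp only [h1, h2]
  rw [Finset.sum_comm (s := Finset.univ) (t := Finset.univ)
    (f := fun y x => ξ.2 y * γ (x, y)), ← Finset.sum_add_distrib]
  apply Finset.sum_congr rfl; intro x _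
  rw [← Finset.sum_add_distrib]
  apply Finset.sum_congr rfl; intro y _; ring

lemma adjA_add (ξ η : (X → ℝ) × (Y → ℝ)) (p : X × Y) :
    adjA (ξ + η) p = adjA ξ p + adjA η p := by
  simp [adjA, Prod.fst_add, Prod.snd_add]; ring

lemma adjA_sub_smul (ξ η : (X → ℝ) × (Y → ℝ)) (s : ℝ) (p : X × Y) :
    adjA (ξ - s • η) p = adjA ξ p - s * adjA η p := by
  simp [adjA, Prod.fst_sub, Prod.snd_sub, Prod.smul_fst, Prod.smul_snd,
    Pi.sub_apply, Pi.smul_apply, smul_eq_mul]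
  ring

/-- Elementary entropy inequality: `a log b + a - b ≤ a log a` for `a ≥ 0`, `b > 0`. -/
lemma key_ineq (a b : ℝ) (ha : 0 ≤ a) (hb : 0 < b) :
    a * Real.log b + a - b ≤ a * Real.log a := by
  rcases eq_or_lt_of_le ha with h | h
  · simp [← h]; linarith
  · have hlog : Real.log (b / a) ≤ b / a - 1 := Real.log_le_sub_one_of_pos (div_pos hb h)
    rw [Real.log_div hb.ne' h.ne'] at hlog
    have := mul_le_mul_of_nonneg_left hlog ha
    have hba : a * (b / a - 1) = b - a := by field_simp
    rw [hba] at this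
    nlinarith

/-- Each term is below the conjugate. -/
lemma le_conj (F : (X → ℝ) × (Y → ℝ) → EReal) (v ξ : (X → ℝ) × (Y → ℝ)) :
    ((dotE v ξ : ℝ) : EReal) - F v ≤ conj F ξ :=
  le_iSup (fun v => ((dotE v ξ : ℝ) : EReal) - F v) v

/-- From an affine minorant one gets a bound on the conjugate. -/
lemma conj_le_of_minorant (F : (X → ℝ) × (Y → ℝ) → EReal) (ζ : (X → ℝ) × (Y → ℝ))
    (α : ℝ) (hm : ∀ v, ((dotE v ζ - α : ℝ) : EReal) ≤ F v) :
    conj F ζ ≤ (α : EReal) := by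
  apply iSup_le
  intro v
  have hv := hm v
  cases hFv : F v with
  | bot =>
      rw [hFv] at hv
      exact absurd hv (by rw [le_bot_iff]; exact EReal.coe_ne_bot _)
  | top => rw [EReal.sub_top]; exact bot_le
  | coe fv =>
      rw [hFv, EReal.coe_le_coe_iff] at hv
      rw [← EReal.coe_sub, EReal.coe_le_coe_iff]
      linarith

/-- Representation of continuous linear functionals on `((X → ℝ) × (Y → ℝ)) × ℝ`. -/
lemma exists_repr (f : (((X → ℝ) × (Y → ℝ)) × ℝ) →L[ℝ] ℝ) :
    ∃ (ζ : (X → ℝ) × (Y → ℝ)) (μ : ℝ), ∀ (v : (X → ℝ) × (Y → ℝ)) (r : ℝ),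
      f (v, r) = dotE v ζ + μ * r := by
  classical
  refine ⟨(fun x => f ((Pi.single x 1, 0), 0), fun y => f ((0, Pi.single y 1), 0)),
    f ((0, 0), 1), ?_⟩
  intro v r
  have hv : ((v, r) : ((X → ℝ) × (Y → ℝ)) × ℝ) =
      (∑ x, (v.1 x) • (((Pi.single x 1 : X → ℝ), (0 : Y → ℝ)), (0:ℝ)))
      + (∑ y, (v.2 y) • ((((0 : X → ℝ)), (Pi.single y 1 : Y → ℝ)), (0:ℝ)))
      + r • ((((0 : X → ℝ)), ((0 : Y → ℝ))), (1:ℝ)) := by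
    refine Prod.ext (Prod.ext ?_ ?_) ?_
    · funext x'
      simp [Prod.fst_sum, Finset.sum_apply, Pi.single_apply]
    · funext y'
      simp [Prod.snd_sum, Prod.fst_sum, Finset.sum_apply, Pi.single_apply]
    · simp [Prod.snd_sum]
  rw [hv]
  simp only [map_add, map_sum, map_smul, smul_eq_mul]
  rw [dotE]; ring

/-- Separation of a point below the epigraph of a proper convex lsc function. -/
lemma sep (F : (X → ℝ) × (Y → ℝ) → EReal)
    (hprop : ∀ v, F v ≠ ⊥) (v₁ : (X → ℝ) × (Y → ℝ)) (hv₁ : F v₁ ≠ ⊤)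
    (hconv : ∀ v w : (X → ℝ) × (Y → ℝ), ∀ a b : ℝ, 0 ≤ a → 0 ≤ b → a + b = 1 →
      F (a • v + b • w) ≤ (a : EReal) * F v + (b : EReal) * F w)
    (hlsc : LowerSemicontinuous F)
    (v₀ : (X → ℝ) × (Y → ℝ)) (β : ℝ) (hβ : ((β : ℝ) : EReal) < F v₀) :
    ∃ (ζ : (X → ℝ) × (Y → ℝ)) (μ uu : ℝ), μ ≤ 0 ∧
      (∀ (v : (X → ℝ) × (Y → ℝ)) (r : ℝ), F v ≤ (↑r : EReal) → dotE v ζ + μ * r < uu) ∧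
      uu < dotE v₀ ζ + μ * β := by
  set K : Set (((X → ℝ) × (Y → ℝ)) × ℝ) := {p | F p.1 ≤ ((p.2 : ℝ) : EReal)} with hK
  have hKclosed : IsClosed K := by
    have h1 : IsClosed {q : ((X → ℝ) × (Y → ℝ)) × EReal | F q.1 ≤ q.2} :=
      hlsc.isClosed_epigraph
    have h2 : K = (fun p : ((X → ℝ) × (Y → ℝ)) × ℝ => (p.1, (p.2 : EReal))) ⁻¹'
        {q : ((X → ℝ) × (Y → ℝ)) × EReal | F q.1 ≤ q.2} := rfl
    rw [h2]
    exact h1.preimage (continuous_fst.prodMk (continuous_coe_real_ereal.comp continuous_snd))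
  have hKconv : Convex ℝ K := by
    rintro ⟨v, r⟩ hvr ⟨w, s⟩ hws a b ha hb hab
    simp only [hK, Set.mem_setOf_eq] at hvr hws ⊢
    have hFv : F v ≠ ⊤ := fun h => by rw [h] at hvr; exact absurd hvr (by simp)
    have hFw : F w ≠ ⊤ := fun h => by rw [h] at hws; exact absurd hws (by simp)
    set fv := (F v).toReal
    set fw := (F w).toReal
    have hFv' : F v = (fv : EReal) := (EReal.coe_toReal hFv (hprop v)).symm
    have hFw' : F w = (fw : EReal) := (EReal.coe_toReal hFw (hprop w)).symm
    have hfvr : fv ≤ r := by rw [hFv'] at hvr; exact EReal.coe_le_coe_iff.1 hvr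
    have hfws : fw ≤ s := by rw [hFw'] at hws; exact EReal.coe_le_coe_iff.1 hws
    have h := hconv v w a b ha hb hab
    rw [hFv', hFw'] at h
    have : ((a : ℝ) : EReal) * (fv : EReal) + ((b : ℝ) : EReal) * (fw : EReal)
        = ((a * fv + b * fw : ℝ) : EReal) := by
      rw [← EReal.coe_mul, ← EReal.coe_mul, ← EReal.coe_add]
    rw [this] at h
    refine h.trans ?_
    rw [EReal.coe_le_coe_iff]
    show a * fv + b * fw ≤ a • r + b • s
    simp only [smul_eq_mul]
    have := mul_le_mul_of_nonneg_left hfvr ha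
    have := mul_le_mul_of_nonneg_left hfws hb
    linarith
  have hnot : ((v₀, β) : ((X → ℝ) × (Y → ℝ)) × ℝ) ∉ K := by
    simp only [hK, Set.mem_setOf_eq]
    exact fun h => absurd hβ (not_lt.2 h)
  obtain ⟨f, u, h1, h2⟩ := geometric_hahn_banach_closed_point hKconv hKclosed hnot
  obtain ⟨ζ, μ, hrepr⟩ := exists_repr f
  set r₁ := (F v₁).toReal
  have hFv₁ : F v₁ = (r₁ : EReal) := (EReal.coe_toReal hv₁ (hprop v₁)).symm
  have hμ : μ ≤ 0 := by
    by_contra hμpos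
    push_neg at hμpos
    set m := max 0 ((u - dotE v₁ ζ - μ * r₁) / μ) with hm
    have hmem : ((v₁, r₁ + m) : ((X → ℝ) × (Y → ℝ)) × ℝ) ∈ K := by
      simp only [hK, Set.mem_setOf_eq]
      rw [hFv₁]
      exact EReal.coe_le_coe_iff.2 (le_add_of_nonneg_right (le_max_left _ _))
    have := h1 _ hmem
    rw [hrepr] at this
    have hge : (u - dotE v₁ ζ - μ * r₁) / μ ≤ m := le_max_right _ _
    have := mul_le_mul_of_nonneg_left hge (le_of_lt hμpos)
    rw [mul_div_cancel₀ _ (ne_of_gt hμpos)] at this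
    have h1' := h1 _ hmem
    rw [hrepr] at h1'
    nlinarith
  refine ⟨ζ, μ, u, hμ, ?_, ?_⟩
  · intro v r hvr
    have := h1 (v, r) hvr
    rwa [hrepr] at this
  · have := h2
    rwa [hrepr] at this

/-- Existence of a global affine minorant for a proper convex lsc function. -/
lemma minorant_exists (F : (X → ℝ) × (Y → ℝ) → EReal)
    (hprop : ∀ v, F v ≠ ⊥) (v₁ : (X → ℝ) × (Y → ℝ)) (hv₁ : F v₁ ≠ ⊤)
    (hconv : ∀ v w : (X → ℝ) × (Y → ℝ), ∀ a b : ℝ, 0 ≤ a → 0 ≤ b → a + b = 1 →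
      F (a • v + b • w) ≤ (a : EReal) * F v + (b : EReal) * F w)
    (hlsc : LowerSemicontinuous F) :
    ∃ (ζ₀ : (X → ℝ) × (Y → ℝ)) (α₀ : ℝ),
      ∀ v, ((dotE v ζ₀ - α₀ : ℝ) : EReal) ≤ F v := by
  set r₁ := (F v₁).toReal
  have hFv₁ : F v₁ = (r₁ : EReal) := (EReal.coe_toReal hv₁ (hprop v₁)).symm
  have hβ : ((r₁ - 1 : ℝ) : EReal) < F v₁ := by
    rw [hFv₁]; exact EReal.coe_lt_coe_iff.2 (by linarith)
  obtain ⟨ζ, μ, uu, hμ, h1, h2⟩ := sep F hprop v₁ hv₁ hconv hlsc v₁ (r₁ - 1) hβ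
  have hμneg : μ < 0 := by
    rcases lt_or_eq_of_le hμ with h | h
    · exact h
    · exfalso
      have ha := h1 v₁ r₁ (le_of_eq hFv₁)
      rw [h] at ha h2
      simp only [zero_mul, add_zero] at ha h2
      linarith
  refine ⟨(-μ⁻¹) • ζ, -(μ⁻¹ * uu), ?_⟩
  intro v
  cases hFv : F v with
  | bot => exact absurd hFv (hprop v)
  | top => exact le_top
  | coe fv =>
      have h3 := h1 v fv (le_of_eq hFv)
      rw [EReal.coe_le_coe_iff, dotE_smul_right]
      have hμne : μ ≠ 0 := ne_of_lt hμneg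
      have h4 : μ * fv < uu - dotE v ζ := by linarith
      have h5 := mul_lt_mul_of_neg_left h4 (inv_lt_zero.2 hμneg)
      rw [inv_mul_cancel_left₀ hμne] at h5
      nlinarith

/-- Key separation bound: any point strictly above value `β` at `v₀` admits an affine
minorant of `F` exceeding `β` at `v₀`. -/
lemma affine_bound (F : (X → ℝ) × (Y → ℝ) → EReal)
    (hprop : ∀ v, F v ≠ ⊥) (v₁ : (X → ℝ) × (Y → ℝ)) (hv₁ : F v₁ ≠ ⊤)
    (hconv : ∀ v w : (X → ℝ) × (Y → ℝ), ∀ a b : ℝ, 0 ≤ a → 0 ≤ b → a + b = 1 →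
      F (a • v + b • w) ≤ (a : EReal) * F v + (b : EReal) * F w)
    (hlsc : LowerSemicontinuous F)
    (v₀ : (X → ℝ) × (Y → ℝ)) (β : ℝ) (hβ : ((β : ℝ) : EReal) < F v₀) :
    ∃ (ζ : (X → ℝ) × (Y → ℝ)) (α : ℝ),
      (∀ v, ((dotE v ζ - α : ℝ) : EReal) ≤ F v) ∧ β < dotE v₀ ζ - α := by
  obtain ⟨ζ, μ, uu, hμ, h1, h2⟩ := sep F hprop v₁ hv₁ hconv hlsc v₀ β hβ
  rcases lt_or_eq_of_le hμ with hμneg | hμzero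
  · -- non-vertical separator
    refine ⟨(-μ⁻¹) • ζ, -(μ⁻¹ * uu), ?_, ?_⟩
    · intro v
      cases hFv : F v with
      | bot => exact absurd hFv (hprop v)
      | top => exact le_top
      | coe fv =>
          have h3 := h1 v fv (le_of_eq hFv)
          rw [EReal.coe_le_coe_iff, dotE_smul_right]
          have hμne : μ ≠ 0 := ne_of_lt hμneg
          have h4 : μ * fv < uu - dotE v ζ := by linarith
          have h5 := mul_lt_mul_of_neg_left h4 (inv_lt_zero.2 hμneg)
          rw [inv_mul_cancel_left₀ hμne] at h5
          nlinarith
    · rw [dotE_smul_right]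
      have hμne : μ ≠ 0 := ne_of_lt hμneg
      have h4 : uu - dotE v₀ ζ < μ * β := by linarith
      have h5 := mul_lt_mul_of_neg_left h4 (inv_lt_zero.2 hμneg)
      rw [inv_mul_cancel_left₀ hμne] at h5
      nlinarith
  · -- vertical separator: combine with a global minorant
    subst hμzero
    simp only [zero_mul, add_zero] at h1 h2
    obtain ⟨ζ₀, α₀, hm⟩ := minorant_exists F hprop v₁ hv₁ hconv hlsc
    have hd : 0 < dotE v₀ ζ - uu := by linarith
    set base := dotE v₀ ζ₀ - α₀ with hbase
    set k := max 0 ((β - base + 1) / (dotE v₀ ζ - uu)) with hk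
    have hk0 : 0 ≤ k := le_max_left _ _
    refine ⟨ζ₀ + k • ζ, α₀ + k * uu, ?_, ?_⟩
    · intro v
      cases hFv : F v with
      | bot => exact absurd hFv (hprop v)
      | top => exact le_top
      | coe fv =>
          have hm' := hm v
          rw [hFv] at hm'
          rw [EReal.coe_le_coe_iff] at hm' ⊢
          rw [dotE_add_right, dotE_smul_right]
          have h3 : F v ≤ ((fv : ℝ) : EReal) := le_of_eq hFv
          have h4 := h1 v fv h3
          nlinarith
    · rw [dotE_add_right, dotE_smul_right]
      have hge : (β - base + 1) / (dotE v₀ ζ - uu) ≤ k := le_max_right _ _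
      have := mul_le_mul_of_nonneg_left hge (le_of_lt hd)
      rw [mul_div_cancel₀ _ (ne_of_gt hd)] at this
      nlinarith


/-- First-order optimality of `ξt` for `K_t`: the marginal of `exp(t(A*ξt - c))` is a
subgradient of the conjugate of `F` at `-ξt`. -/
lemma gradient_bound (F : (X → ℝ) × (Y → ℝ) → EReal) (c : X × Y → ℝ)
    (t : ℝ) (ht : 0 < t) (ξt : (X → ℝ) × (Y → ℝ))
    (hξt : ∀ ξ, KtE F c t ξt ≤ KtE F c t ξ)
    (hprop : ∀ v, F v ≠ ⊥) (v₁ : (X → ℝ) × (Y → ℝ)) (hv₁ : F v₁ ≠ ⊤)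
    (fs : ℝ) (hfs : conj F (-ξt) = (fs : EReal)) (ζ : (X → ℝ) × (Y → ℝ)) :
    ((fs + dotE (margA (fun p => Real.exp (t * (adjA ξt p - c p)))) (ζ + ξt) : ℝ) : EReal)
      ≤ conj F ζ := by
  by_cases hcz : conj F ζ = ⊤
  · rw [hcz]; exact le_top
  have hFv₁ : F v₁ = ((F v₁).toReal : EReal) := (EReal.coe_toReal hv₁ (hprop v₁)).symm
  have hczb : conj F ζ ≠ ⊥ := by
    intro hb
    have h := le_conj F v₁ ζ
    rw [hb, le_bot_iff, hFv₁, ← EReal.coe_sub] at h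
    exact EReal.coe_ne_bot _ h
  set cz := (conj F ζ).toReal with hczdef
  have hczE : conj F ζ = (cz : EReal) := (EReal.coe_toReal hcz hczb).symm
  set η := ζ + ξt with hη
  set G : ℝ → ℝ := fun s =>
    ∑ p, Real.exp (t * (adjA ξt p - c p) - s * (t * adjA η p)) * adjA η p with hG
  have key : ∀ s : ℝ, 0 < s → s ≤ 1 → G s ≤ cz - fs := by
    intro s hs hs1
    set ξs := ξt - s • η with hξs
    have hvec : -ξs = (1 - s) • (-ξt) + s • ζ := by
      rw [hξs, hη]; module
    have hconvp : ∀ p : X × Y, Real.exp (t * (adjA ξs p - c p))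
        = Real.exp (t * (adjA ξt p - c p) - s * (t * adjA η p)) := by
      intro p
      congr 1
      rw [hξs, adjA_sub_smul]; ring
    have h1 : conj F (-ξs) ≤ (((1 - s) * fs + s * cz : ℝ) : EReal) := by
      apply iSup_le; intro v
      cases hFv : F v with
      | bot => exact absurd hFv (hprop v)
      | top => rw [EReal.sub_top]; exact bot_le
      | coe fv =>
          rw [← EReal.coe_sub, EReal.coe_le_coe_iff]
          have e1 := le_conj F v (-ξt)
          rw [hFv, hfs, ← EReal.coe_sub, EReal.coe_le_coe_iff] at e1
          have e2 := le_conj F v ζ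
          rw [hFv, hczE, ← EReal.coe_sub, EReal.coe_le_coe_iff] at e2
          have hdv : dotE v (-ξs) = (1 - s) * dotE v (-ξt) + s * dotE v ζ := by
            rw [hvec, dotE_add_right, dotE_smul_right, dotE_smul_right]
          have e1' := mul_le_mul_of_nonneg_left e1 (by linarith : (0:ℝ) ≤ 1 - s)
          have e2' := mul_le_mul_of_nonneg_left e2 (le_of_lt hs)
          rw [hdv]
          nlinarith
    have h2 := hξt ξs
    rw [KtE, KtE, hfs] at h2
    have h3 : fs + 1 / t * ∑ p, Real.exp (t * (adjA ξt p - c p))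
        ≤ (1 - s) * fs + s * cz + 1 / t * ∑ p, Real.exp (t * (adjA ξs p - c p)) := by
      have hcalc : ((fs + 1 / t * ∑ p, Real.exp (t * (adjA ξt p - c p)) : ℝ) : EReal)
          ≤ (((1 - s) * fs + s * cz + 1 / t * ∑ p, Real.exp (t * (adjA ξs p - c p)) : ℝ) : EReal) := by
        rw [EReal.coe_add, EReal.coe_add]
        calc ((fs : ℝ) : EReal) + ((1 / t * ∑ p, Real.exp (t * (adjA ξt p - c p)) : ℝ) : EReal)
            ≤ conj F (-ξs) + ((1 / t * ∑ p, Real.exp (t * (adjA ξs p - c p)) : ℝ) : EReal) := h2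
          _ ≤ (((1 - s) * fs + s * cz : ℝ) : EReal)
              + ((1 / t * ∑ p, Real.exp (t * (adjA ξs p - c p)) : ℝ) : EReal) :=
            add_le_add_left h1 _
      exact EReal.coe_le_coe_iff.1 hcalc
    rw [Finset.sum_congr rfl (fun p _ => hconvp p)] at h3
    have h5 : ∀ p ∈ (Finset.univ : Finset (X × Y)),
        Real.exp (t * (adjA ξt p - c p) - s * (t * adjA η p)) * (t * s * adjA η p)
        ≤ Real.exp (t * (adjA ξt p - c p))
          - Real.exp (t * (adjA ξt p - c p) - s * (t * adjA η p)) := by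
      intro p _
      set A := t * (adjA ξt p - c p) - s * (t * adjA η p) with hA
      set B := t * (adjA ξt p - c p) with hB
      have hdiff : B - A = t * s * adjA η p := by rw [hA, hB]; ring
      have hexp := Real.add_one_le_exp (B - A)
      have hmul : Real.exp (B - A) * Real.exp A = Real.exp B := by
        rw [← Real.exp_add]; congr 1; ring
      have hApos := Real.exp_pos A
      rw [← hdiff]
      nlinarith
    have h6 := Finset.sum_le_sum h5
    rw [Finset.sum_sub_distrib] at h6
    have h7 : ∑ p, Real.exp (t * (adjA ξt p - c p) - s * (t * adjA η p)) * (t * s * adjA η p)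
        = t * s * G s := by
      rw [hG, Finset.mul_sum]
      apply Finset.sum_congr rfl
      intro p _
      ring
    rw [h7] at h6
    have h11 := mul_le_mul_of_nonneg_left h6 (le_of_lt (one_div_pos.2 ht))
    have h12 : 1 / t * (t * s * G s) = s * G s := by field_simp
    rw [h12, mul_sub] at h11
    have h13 : s * G s ≤ s * (cz - fs) := by nlinarith [h3, h11]
    exact le_of_mul_le_mul_left h13 hs
  have hGcont : Continuous G := by
    rw [hG]
    apply continuous_finset_sum
    intro p _
    exact ((Real.continuous_exp.comp
      (continuous_const.sub (continuous_id.mul continuous_const))).mul continuous_const)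
  have hGle : G 0 ≤ cz - fs := by
    have hlim : Filter.Tendsto G (nhdsWithin 0 (Set.Ioi 0)) (nhds (G 0)) :=
      (hGcont.tendsto 0).mono_left nhdsWithin_le_nhds
    refine le_of_tendsto hlim ?_
    filter_upwards [Ioc_mem_nhdsGT_of_mem
      (by constructor <;> norm_num : (0:ℝ) ∈ Set.Ico (0:ℝ) 1)] with s hs
    exact key s hs.1 hs.2
  have hG0 : dotE (margA (fun p => Real.exp (t * (adjA ξt p - c p)))) η = G 0 := by
    rw [dotE_margA, hG]
    simp only [zero_mul, sub_zero]
    apply Finset.sum_congr rfl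
    intro p _
    ring
  rw [hczE, EReal.coe_le_coe_iff, hG0]
  linarith

end AuxLemmas

/-- primal-dual relation `γ_t = exp(t(A*ξ_t − c))` between the
unique minimizer of `C_t` and any minimizer of `K_t`. -/
theorem statement5 {X Y : Type*} [Fintype X] [Fintype Y] [Nonempty X] [Nonempty Y]
    (c : X × Y → ℝ) (hc : ∀ p, 0 ≤ c p)
    (F : (X → ℝ) × (Y → ℝ) → EReal) (hF1 : H1 F) (hF2 : H2 F)
    (t : ℝ) (ht : 0 < t)
    (γt : X × Y → ℝ) (hγt : ∀ γ : X × Y → ℝ, Ct F c t γt ≤ Ct F c t γ)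
    (hγtuniq : ∀ γ' : X × Y → ℝ, (∀ γ : X × Y → ℝ, Ct F c t γ' ≤ Ct F c t γ) → γ' = γt)
    (ξt : (X → ℝ) × (Y → ℝ)) (hξt : ∀ ξ, KtE F c t ξt ≤ KtE F c t ξ) :
    ∀ p : X × Y, γt p = Real.exp (t * (adjA ξt p - c p)) := by
  classical
  obtain ⟨hprop, ⟨v₁, hv₁⟩, hconv, hlsc⟩ := hF1
  set g : X × Y → ℝ := fun p => Real.exp (t * (adjA ξt p - c p)) with hg
  have hgpos : ∀ p, 0 < g p := fun p => Real.exp_pos _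
  -- Step 1: the conjugate of `F` is finite at `-ξt`.
  obtain ⟨ζ₀, α₀, hm⟩ := minorant_exists F hprop v₁ hv₁ hconv hlsc
  have hconj₀ : conj F ζ₀ ≤ (α₀ : EReal) := conj_le_of_minorant F ζ₀ α₀ hm
  have hKfin : KtE F c t (-ζ₀) ≠ ⊤ := by
    rw [KtE, neg_neg]
    intro h
    have h2 : conj F ζ₀ + ((1 / t * ∑ p, Real.exp (t * (adjA (-ζ₀) p - c p)) : ℝ) : EReal)
        ≤ (α₀ : EReal) + ((1 / t * ∑ p, Real.exp (t * (adjA (-ζ₀) p - c p)) : ℝ) : EReal) :=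
      add_le_add_left hconj₀ _
    rw [h, ← EReal.coe_add] at h2
    exact EReal.coe_ne_top _ (top_le_iff.1 h2)
  have hKξt : KtE F c t ξt ≠ ⊤ := fun h => hKfin (top_le_iff.1 (h ▸ hξt (-ζ₀)))
  have hct : conj F (-ξt) ≠ ⊤ := by
    intro h
    apply hKξt
    rw [KtE, h, EReal.top_add_of_ne_bot (EReal.coe_ne_bot _)]
  have hcb : conj F (-ξt) ≠ ⊥ := by
    intro h
    have hFv₁ : F v₁ = ((F v₁).toReal : EReal) := (EReal.coe_toReal hv₁ (hprop v₁)).symm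
    have h' := le_conj F v₁ (-ξt)
    rw [h, le_bot_iff, hFv₁, ← EReal.coe_sub] at h'
    exact EReal.coe_ne_bot _ h'
  set fs := (conj F (-ξt)).toReal with hfsdef
  have hfs : conj F (-ξt) = (fs : EReal) := (EReal.coe_toReal hct hcb).symm
  -- Step 2: Fenchel equality at `margA g` via separation.
  have hFg : F (margA g) ≤ ((- dotE (margA g) ξt - fs : ℝ) : EReal) := by
    by_contra hcon
    push_neg at hcon
    obtain ⟨ζ, α, hm2, hgt⟩ := affine_bound F hprop v₁ hv₁ hconv hlsc (margA g) _ hcon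
    have hb1 : conj F ζ ≤ (α : EReal) := conj_le_of_minorant F ζ α hm2
    have hb2 := gradient_bound F c t ht ξt hξt hprop v₁ hv₁ fs hfs ζ
    have hb3 : fs + dotE (margA g) (ζ + ξt) ≤ α := by
      have h := hb2.trans hb1
      rwa [EReal.coe_le_coe_iff] at h
    rw [dotE_add_right] at hb3
    linarith
  -- Step 3: upper bound for `Ct` at `g`.
  have hlogg : ∀ p, Real.log (g p) = t * (adjA ξt p - c p) := fun p => by
    rw [hg]; exact Real.log_exp _
  have hentg : ent g = ((∑ p, g p * (t * (adjA ξt p - c p) - 1) : ℝ) : EReal) := by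
    rw [ent, if_pos (fun p => (hgpos p).le)]
    congr 1
    apply Finset.sum_congr rfl
    intro p _
    rw [hlogg p]
  have hCtg : Ct F c t g ≤ ((-fs - 1 / t * ∑ p, g p : ℝ) : EReal) := by
    rw [Ct, hentg]
    have step : ((dotP c g : ℝ) : EReal) + F (margA g)
        + ((1 / t : ℝ) : EReal) * ((∑ p, g p * (t * (adjA ξt p - c p) - 1) : ℝ) : EReal)
        ≤ ((dotP c g + (- dotE (margA g) ξt - fs)
            + 1 / t * ∑ p, g p * (t * (adjA ξt p - c p) - 1) : ℝ) : EReal) := by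
      rw [EReal.coe_add, EReal.coe_add, ← EReal.coe_mul]
      exact add_le_add_left (add_le_add_right hFg _) _
    refine step.trans (le_of_eq ?_)
    have hreal : dotP c g + (- dotE (margA g) ξt - fs)
        + 1 / t * ∑ p, g p * (t * (adjA ξt p - c p) - 1)
        = -fs - 1 / t * ∑ p, g p := by
      have hsum : dotP c g - dotE (margA g) ξt
          + 1 / t * ∑ p, g p * (t * (adjA ξt p - c p) - 1)
          = - (1 / t * ∑ p, g p) := by
        rw [dotP, dotE_margA, Finset.mul_sum, Finset.mul_sum, ← Finset.sum_sub_distrib,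
          ← Finset.sum_add_distrib, ← Finset.sum_neg_distrib]
        apply Finset.sum_congr rfl
        intro p _
        field_simp
        ring
      linarith
    rw [hreal]
  -- Step 4: lower bound for `Ct` at any `γ`.
  have hlb : ∀ γ : X × Y → ℝ, ((-fs - 1 / t * ∑ p, g p : ℝ) : EReal) ≤ Ct F c t γ := by
    intro γ
    rw [Ct]
    by_cases hpos : ∀ p, 0 ≤ γ p
    · cases hFγ : F (margA γ) with
      | bot => exact absurd hFγ (hprop _)
      | top =>
          rw [ent, if_pos hpos, EReal.coe_add_top, ← EReal.coe_mul,
            EReal.top_add_of_ne_bot (EReal.coe_ne_bot _)]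
          exact le_top
      | coe fv =>
          rw [ent, if_pos hpos, ← EReal.coe_mul, ← EReal.coe_add, ← EReal.coe_add,
            EReal.coe_le_coe_iff]
          have ha : -dotE (margA γ) ξt - fs ≤ fv := by
            have h := le_conj F (margA γ) (-ξt)
            rw [hFγ, hfs, ← EReal.coe_sub, EReal.coe_le_coe_iff, dotE_neg_right] at h
            linarith
          have hb : ∀ p ∈ (Finset.univ : Finset (X × Y)),
              adjA ξt p * γ p - 1 / t * g p
              ≤ c p * γ p + 1 / t * (γ p * (Real.log (γ p) - 1)) := by
            intro p _
            have hk := key_ineq (γ p) (g p) (hpos p) (hgpos p)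
            rw [hlogg p] at hk
            rw [show adjA ξt p * γ p - 1 / t * g p
                = (t * (adjA ξt p * γ p) - g p) / t by field_simp,
              show c p * γ p + 1 / t * (γ p * (Real.log (γ p) - 1))
                = (t * (c p * γ p) + γ p * (Real.log (γ p) - 1)) / t by field_simp]
            refine (div_le_div_iff_of_pos_right ht).2 ?_
            nlinarith
          have hsum := Finset.sum_le_sum hb
          rw [Finset.sum_sub_distrib, Finset.sum_add_distrib, ← Finset.mul_sum,
            ← Finset.mul_sum] at hsum
          have hd : dotE (margA γ) ξt = ∑ p, adjA ξt p * γ p := dotE_margA γ ξt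
          rw [dotP]
          rw [hd] at ha
          linarith
    · rw [ent, if_neg hpos, EReal.coe_mul_top_of_pos (by positivity)]
      have h2 : ((dotP c γ : ℝ) : EReal) + F (margA γ) ≠ ⊥ := by
        rw [Ne, EReal.add_eq_bot_iff]
        push_neg
        exact ⟨EReal.coe_ne_bot _, hprop _⟩
      rw [EReal.add_top_of_ne_bot h2]
      exact le_top
  -- Conclusion via uniqueness.
  have hmin : ∀ γ : X × Y → ℝ, Ct F c t g ≤ Ct F c t γ := fun γ => hCtg.trans (hlb γ)
  have hgγt := hγtuniq g hmin
  intro p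
  rw [← hgγt, hg]
end

section
/- Assume (H1) and (H4). Then the function ξ ↦ inf_{t>0} K_t(ξ) is coercive: it tends to +∞ as ‖ξ‖ → +∞. -/
open scoped BigOperators
open Filter

noncomputable section

variable {X Y : Type*}

section Aux

private lemma s8_exp_lb (a t : ℝ) (ht : 0 < t) :
    Real.exp 1 * a ≤ (1 / t) * Real.exp (t * a) := by
  have h1 : (t * a - 1) + 1 ≤ Real.exp (t * a - 1) := Real.add_one_le_exp _
  have h2 : Real.exp 1 * (t * a) ≤ Real.exp (t * a) := by
    have h3 : Real.exp 1 * ((t * a - 1) + 1) ≤ Real.exp 1 * Real.exp (t * a - 1) :=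
      mul_le_mul_of_nonneg_left h1 (Real.exp_pos 1).le
    have h4 : Real.exp 1 * Real.exp (t * a - 1) = Real.exp (t * a) := by
      rw [← Real.exp_add]; ring_nf
    nlinarith
  rw [div_mul_eq_mul_div, le_div_iff₀ ht]
  nlinarith

private lemma s8_arith {e ε' C Cc M P Q N B0 : ℝ} (he : 0 < e) (hε : 0 < ε') (hCc : 0 ≤ Cc)
    (hP : 0 ≤ P) (hQ : 0 ≤ Q) (hN : 0 ≤ N)
    (hB0 : 0 ≤ B0) (hB2 : M + C + e * Cc ≤ B0)
    (hR : 8 * e * B0 + 4 * ε' * B0 ≤ ε' * e * (P + Q + N)) :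
    M ≤ ε' * N - C + max 0 (e * (P + Q - 2 * N - Cc)) := by
  by_cases h : M + C ≤ ε' * N
  · have := le_max_left 0 (e * (P + Q - 2 * N - Cc)); linarith
  · push_neg at h
    have h2 : e * (P + Q - 2 * N - Cc) ≤ max 0 (e * (P + Q - 2 * N - Cc)) := le_max_right _ _
    have hMC : M + C ≤ B0 := by nlinarith
    have hN2 : ε' * N ≤ B0 := h.le.trans hMC
    have key : M + C + e * Cc + 2 * e * N ≤ ε' * N + e * (P + Q) := by
      nlinarith [mul_le_mul_of_nonneg_left hN2 he.le, mul_le_mul_of_nonneg_left hB2 hε.le,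
        mul_nonneg hε.le hN, mul_pos he hε, mul_nonneg (mul_nonneg he.le hε.le) hN]
    linarith

end Aux

end
/-- uniform coercivity of the family `K_t`: `ξ ↦ inf_{t>0} K_t(ξ)`
tends to `+∞` as `‖ξ‖ → +∞`. -/
theorem statement8 {X Y : Type*} [Fintype X] [Fintype Y] [Nonempty X] [Nonempty Y]
    (c : X × Y → ℝ) (hc : ∀ p, 0 ≤ c p)
    (F : (X → ℝ) × (Y → ℝ) → EReal) (hF1 : H1 F) (hF4 : H4 F) :
    ∀ M : ℝ, ∃ R : ℝ, ∀ ξ : (X → ℝ) × (Y → ℝ), R ≤ ‖ξ‖ →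
      (M : EReal) ≤ ⨅ t ∈ Set.Ioi (0 : ℝ), KtE F c t ξ := by

  intro M
  classical
  obtain ⟨hFbot, -, -, -⟩ := hF1
  obtain ⟨W, hW, hWF⟩ := hF4
  obtain ⟨ε, hεpos, hball⟩ := Metric.mem_nhds_iff.mp hW
  set ε' : ℝ := ε / 2 with hε'def
  have hε'pos : 0 < ε' := by positivity
  -- vertices of the small cube
  set vtx : ((X → Bool) × (Y → Bool)) → (X → ℝ) × (Y → ℝ) :=
    fun s => (fun x => if s.1 x then ε' else 0, fun y => if s.2 y then ε' else 0) with hvtxdef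
  have hvtx_norm : ∀ s, ‖vtx s‖ < ε := by
    intro s
    have h1 : ‖(vtx s).1‖ ≤ ε' := by
      rw [pi_norm_le_iff_of_nonneg hε'pos.le]
      intro x
      simp only [hvtxdef, Real.norm_eq_abs]
      split <;> simp [abs_of_nonneg, hε'pos.le]
    have h2 : ‖(vtx s).2‖ ≤ ε' := by
      rw [pi_norm_le_iff_of_nonneg hε'pos.le]
      intro y
      simp only [hvtxdef, Real.norm_eq_abs]
      split <;> simp [abs_of_nonneg, hε'pos.le]
    have : ‖vtx s‖ ≤ ε' := by
      rw [Prod.norm_def]; exact max_le h1 h2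
    linarith [this, half_lt_self hεpos]
  have hvtx_top : ∀ s, F (vtx s) ≠ ⊤ := by
    intro s
    refine hWF _ (hball (mem_ball_zero_iff.mpr (hvtx_norm s))) ?_ ?_
    · intro x; simp only [hvtxdef]; split <;> simp [hε'pos.le]
    · intro y; simp only [hvtxdef]; split <;> simp [hε'pos.le]
  -- uniform bound on F over vertices
  set C : ℝ := Finset.univ.sup' (Finset.univ_nonempty) (fun s => (F (vtx s)).toReal) with hCdef
  have hFC : ∀ s, F (vtx s) ≤ (C : EReal) := by
    intro s
    have h1 : F (vtx s) = (((F (vtx s)).toReal : ℝ) : EReal) :=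
      (EReal.coe_toReal (hvtx_top s) (hFbot _)).symm
    rw [h1]
    exact_mod_cast Finset.le_sup' (fun s => (F (vtx s)).toReal) (Finset.mem_univ s)
  set Cc : ℝ := ∑ p, c p with hCcdef
  have hCc0 : 0 ≤ Cc := Finset.sum_nonneg fun p _ => hc p
  set e : ℝ := Real.exp 1 with hedef
  have hepos : 0 < e := Real.exp_pos 1
  set B0 : ℝ := max 1 (M + C + e * Cc) with hB0def
  have hB0pos : (0:ℝ) < B0 := lt_of_lt_of_le one_pos (le_max_left _ _)
  refine ⟨(8 / ε' + 4 / e) * B0, ?_⟩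
  intro ξ hξ
  refine le_iInf₂ fun t ht => ?_
  have htpos : (0:ℝ) < t := ht
  -- argmax coordinates
  obtain ⟨x0, -, hx0⟩ := Finset.exists_max_image Finset.univ ξ.1 ⟨Classical.arbitrary X, Finset.mem_univ _⟩
  obtain ⟨y0, -, hy0⟩ := Finset.exists_max_image Finset.univ ξ.2 ⟨Classical.arbitrary Y, Finset.mem_univ _⟩
  set N : ℝ := (∑ x, max (-(ξ.1 x)) 0) + ∑ y, max (-(ξ.2 y)) 0 with hNdef
  set P : ℝ := max (ξ.1 x0) 0 with hPdef
  set Q : ℝ := max (ξ.2 y0) 0 with hQdef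
  have hsum1_nonneg : (0:ℝ) ≤ ∑ x, max (-(ξ.1 x)) 0 :=
    Finset.sum_nonneg fun x _ => le_max_right _ _
  have hsum2_nonneg : (0:ℝ) ≤ ∑ y, max (-(ξ.2 y)) 0 :=
    Finset.sum_nonneg fun y _ => le_max_right _ _
  have hN0 : 0 ≤ N := add_nonneg hsum1_nonneg hsum2_nonneg
  have hP0 : 0 ≤ P := le_max_right _ _
  have hQ0 : 0 ≤ Q := le_max_right _ _
  have hNφ : max (-(ξ.1 x0)) 0 ≤ N := by
    have := Finset.single_le_sum (f := fun x => max (-(ξ.1 x)) 0)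
      (fun x _ => le_max_right _ _) (Finset.mem_univ x0)
    simp only [hNdef]; linarith
  have hNψ : max (-(ξ.2 y0)) 0 ≤ N := by
    have := Finset.single_le_sum (f := fun y => max (-(ξ.2 y)) 0)
      (fun y _ => le_max_right _ _) (Finset.mem_univ y0)
    simp only [hNdef]; linarith
  -- norm bound : ‖ξ‖ ≤ P + Q + N
  have hnorm : ‖ξ‖ ≤ P + Q + N := by
    have h1 : ‖ξ.1‖ ≤ P + Q + N := by
      rw [pi_norm_le_iff_of_nonneg (by linarith)]
      intro x
      have hxle : ξ.1 x ≤ P := (hx0 x (Finset.mem_univ x)).trans (le_max_left _ _)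
      have hxge : -(ξ.1 x) ≤ N := by
        have h := Finset.single_le_sum (f := fun x => max (-(ξ.1 x)) 0)
          (fun x _ => le_max_right _ _) (Finset.mem_univ x)
        have := le_max_left (-(ξ.1 x)) 0
        simp only [hNdef]; linarith
      rw [Real.norm_eq_abs, abs_le]; constructor <;> linarith
    have h2 : ‖ξ.2‖ ≤ P + Q + N := by
      rw [pi_norm_le_iff_of_nonneg (by linarith)]
      intro y
      have hyle : ξ.2 y ≤ Q := (hy0 y (Finset.mem_univ y)).trans (le_max_left _ _)
      have hyge : -(ξ.2 y) ≤ N := by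
        have h := Finset.single_le_sum (f := fun y => max (-(ξ.2 y)) 0)
          (fun y _ => le_max_right _ _) (Finset.mem_univ y)
        have := le_max_left (-(ξ.2 y)) 0
        simp only [hNdef]; linarith
      rw [Real.norm_eq_abs, abs_le]; constructor <;> linarith
    rw [Prod.norm_def]; exact max_le h1 h2
  -- conjugate lower bound
  have hconj : ((ε' * N - C : ℝ) : EReal) ≤ conj F (-ξ) := by
    set s : (X → Bool) × (Y → Bool) := (fun x => decide (ξ.1 x < 0), fun y => decide (ξ.2 y < 0)) with hsdef
    have hdot : dotE (vtx s) (-ξ) = ε' * N := by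
      simp only [dotE, hNdef, mul_add, Finset.mul_sum]
      congr 1
      · refine Finset.sum_congr rfl fun x _ => ?_
        simp only [hvtxdef, hsdef, Prod.fst_neg, Pi.neg_apply]
        by_cases h : ξ.1 x < 0
        · simp [h, max_eq_left (by linarith : (0:ℝ) ≤ -(ξ.1 x))]
        · push_neg at h
          simp [not_lt.mpr h, max_eq_right (by linarith : -(ξ.1 x) ≤ 0)]
      · refine Finset.sum_congr rfl fun y _ => ?_
        simp only [hvtxdef, hsdef, Prod.snd_neg, Pi.neg_apply]
        by_cases h : ξ.2 y < 0
        · simp [h, max_eq_left (by linarith : (0:ℝ) ≤ -(ξ.2 y))]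
        · push_neg at h
          simp [not_lt.mpr h, max_eq_right (by linarith : -(ξ.2 y) ≤ 0)]
    have h1 : ((ε' * N - C : ℝ) : EReal) ≤ ((dotE (vtx s) (-ξ) : ℝ) : EReal) - F (vtx s) := by
      rw [hdot, EReal.coe_sub]
      exact EReal.sub_le_sub (le_refl _) (hFC s)
    exact h1.trans (le_iSup (fun v => ((dotE v (-ξ) : ℝ) : EReal) - F v) (vtx s))
  -- exponential term lower bound
  have hexp : max 0 (e * (P + Q - 2 * N - Cc)) ≤ (1 / t) * ∑ p, Real.exp (t * (adjA ξ p - c p)) := by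
    have hr0 : (0:ℝ) ≤ (1 / t) * ∑ p, Real.exp (t * (adjA ξ p - c p)) := by
      apply mul_nonneg (by positivity)
      exact Finset.sum_nonneg fun p _ => (Real.exp_pos _).le
    have hsingle : Real.exp (t * (adjA ξ (x0, y0) - c (x0, y0))) ≤
        ∑ p, Real.exp (t * (adjA ξ p - c p)) :=
      Finset.single_le_sum (f := fun p : X × Y => Real.exp (t * (adjA ξ p - c p)))
        (fun p _ => (Real.exp_pos _).le) (Finset.mem_univ (x0, y0))
    have h1 : e * (adjA ξ (x0, y0) - c (x0, y0)) ≤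
        (1 / t) * ∑ p, Real.exp (t * (adjA ξ p - c p)) := by
      refine (s8_exp_lb _ t htpos).trans ?_
      exact mul_le_mul_of_nonneg_left hsingle (by positivity)
    have hc0 : c (x0, y0) ≤ Cc :=
      Finset.single_le_sum (fun p _ => hc p) (Finset.mem_univ (x0, y0))
    have hadj : P + Q - 2 * N - Cc ≤ adjA ξ (x0, y0) - c (x0, y0) := by
      have e1 : ξ.1 x0 = P - max (-(ξ.1 x0)) 0 := by
        have := max_zero_sub_max_neg_zero_eq_self (ξ.1 x0)
        simp only [hPdef]; linarith [this]
      have e2 : ξ.2 y0 = Q - max (-(ξ.2 y0)) 0 := by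
        have := max_zero_sub_max_neg_zero_eq_self (ξ.2 y0)
        simp only [hQdef]; linarith [this]
      simp only [adjA]
      linarith
    have h2 : e * (P + Q - 2 * N - Cc) ≤ (1 / t) * ∑ p, Real.exp (t * (adjA ξ p - c p)) := by
      refine le_trans ?_ h1
      exact mul_le_mul_of_nonneg_left hadj hepos.le
    exact max_le hr0 h2
  -- combine
  have hRle : 8 * e * B0 + 4 * ε' * B0 ≤ ε' * e * (P + Q + N) := by
    have h0 : (8 / ε' + 4 / e) * B0 ≤ P + Q + N := le_trans hξ hnorm
    have h1 : ε' * e * ((8 / ε' + 4 / e) * B0) ≤ ε' * e * (P + Q + N) :=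
      mul_le_mul_of_nonneg_left h0 (by positivity)
    have h2 : ε' * e * ((8 / ε' + 4 / e) * B0) = 8 * e * B0 + 4 * ε' * B0 := by
      field_simp
    rw [h2] at h1; exact h1
  have hfinal : M ≤ ε' * N - C + max 0 (e * (P + Q - 2 * N - Cc)) :=
    s8_arith hepos hε'pos hCc0 hP0 hQ0 hN0 hB0pos.le (le_max_right _ _) hRle
  calc (M : EReal) ≤ (((ε' * N - C) + max 0 (e * (P + Q - 2 * N - Cc)) : ℝ) : EReal) := by
        exact_mod_cast hfinal
    _ = ((ε' * N - C : ℝ) : EReal) + ((max 0 (e * (P + Q - 2 * N - Cc)) : ℝ) : EReal) := by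
        rw [EReal.coe_add]
    _ ≤ conj F (-ξ) + (((1 / t) * ∑ p, Real.exp (t * (adjA ξ p - c p)) : ℝ) : EReal) :=
        add_le_add hconj (EReal.coe_le_coe_iff.mpr hexp)
    _ = KtE F c t ξ := rfl
end

section
/- Assume (H1)–(H6). For t > 0 let ξ(t) be the unique minimizer of K_t and set γ(t) = exp(t(A*ξ(t) − c)) componentwise. Then for every t > 0 the derivative ξ'(t) exists and satisfies the ordinary differential equation A diag(γ(t)) A* ξ'(t) + (1/t) ∇²F*(−ξ(t)) ξ'(t) + (1/t²) A (γ(t) ⊙ log γ(t)) = 0, where diag(γ(t)) is the diagonal operator of componentwise multiplication by γ(t), ⊙ is the componentwise product, and ∇²F* denotes the Hessian of F*. -/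
open scoped BigOperators
open Filter

noncomputable section

variable {X Y : Type*}

namespace S10

variable [Fintype X] [Fintype Y]

/-- evaluation of the adjoint as a continuous linear map -/
def Lp (p : X × Y) : ((X → ℝ) × (Y → ℝ)) →L[ℝ] ℝ :=
  LinearMap.toContinuousLinearMap ((LinearMap.proj p).comp (adjAlin X Y))

@[simp] lemma Lp_apply (p : X × Y) (ζ : (X → ℝ) × (Y → ℝ)) :
    Lp p ζ = ζ.1 p.1 + ζ.2 p.2 := rfl

lemma Lp_eq_adjA (p : X × Y) (ζ : (X → ℝ) × (Y → ℝ)) : Lp p ζ = adjA ζ p := rfl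

lemma dotE_margA (γ : X × Y → ℝ) (ζ : (X → ℝ) × (Y → ℝ)) :
    dotE (margA γ) ζ = ∑ p, γ p * adjA ζ p := by
  simp only [dotE, margA, adjA]
  rw [Fintype.sum_prod_type]
  simp only [mul_add, Finset.sum_add_distrib, Finset.sum_mul]
  congr 1
  rw [Finset.sum_comm]

lemma dotE_smul (g : (X → ℝ) × (Y → ℝ)) (a : ℝ) (u : (X → ℝ) × (Y → ℝ)) :
    dotE g (a • u) = a * dotE g u := by
  simp only [dotE, Prod.smul_fst, Prod.smul_snd, Pi.smul_apply, smul_eq_mul,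
    Finset.mul_sum, mul_add]
  congr 1 <;> exact Finset.sum_congr rfl fun _ _ => by ring

lemma dotE_add (g u v : (X → ℝ) × (Y → ℝ)) :
    dotE g (u + v) = dotE g u + dotE g v := by
  simp only [dotE, Prod.fst_add, Prod.snd_add, Pi.add_apply, mul_add,
    Finset.sum_add_distrib]
  ring

end S10
section Helpers

/-- If `u` has derivative `L` at `0` and arbitrarily close to `0` on the right there are
points with slope at least `b`, then `b ≤ L`. -/
lemma le_deriv_of_slopes {u : ℝ → ℝ} {L b : ℝ} (hu : HasDerivAt u L 0)
    (h : ∀ ε, 0 < ε → ∃ s, 0 < s ∧ s < ε ∧ b ≤ (u s - u 0) / s) : b ≤ L := by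
  have hsl : Filter.Tendsto (fun s => (u s - u 0) / s) (nhdsWithin 0 {(0:ℝ)}ᶜ) (nhds L) := by
    have := hasDerivAt_iff_tendsto_slope.1 hu
    refine this.congr' ?_
    filter_upwards [self_mem_nhdsWithin] with s hs
    simp [slope_def_field]
  -- choose a sequence
  choose! f hf0 hfe hfb using h
  set cn : ℕ → ℝ := fun n => f (1 / (n + 1)) with hcn
  have hpos : ∀ n : ℕ, (0:ℝ) < 1 / (n + 1) := fun n => by positivity
  have hc0 : ∀ n, 0 < cn n := fun n => hf0 _ (hpos n)
  have hce : ∀ n, cn n < 1 / (n + 1) := fun n => hfe _ (hpos n)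
  have hcb : ∀ n, b ≤ (u (cn n) - u 0) / cn n := fun n => hfb _ (hpos n)
  have hto : Filter.Tendsto cn Filter.atTop (nhds 0) := by
    have h1 : Filter.Tendsto (fun n : ℕ => 1 / ((n:ℝ) + 1)) Filter.atTop (nhds 0) :=
      tendsto_one_div_add_atTop_nhds_zero_nat
    exact squeeze_zero (fun n => (hc0 n).le) (fun n => (hce n).le) h1
  have hto' : Filter.Tendsto cn Filter.atTop (nhdsWithin 0 {(0:ℝ)}ᶜ) := by
    refine tendsto_nhdsWithin_of_tendsto_nhds_of_eventually_within _ hto ?_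
    exact Filter.Eventually.of_forall fun n => (ne_of_gt (hc0 n))
  have : Filter.Tendsto (fun n => (u (cn n) - u 0) / cn n) Filter.atTop (nhds L) :=
    hsl.comp hto'
  exact ge_of_tendsto this (Filter.Eventually.of_forall hcb)

/-- If `u` has derivative `L` at `0` and slopes on a right interval are at most `b`,
then `L ≤ b`. -/
lemma deriv_le_of_slopes {u : ℝ → ℝ} {L b : ℝ} (hu : HasDerivAt u L 0)
    {s₀ : ℝ} (hs₀ : 0 < s₀) (h : ∀ s, 0 < s → s ≤ s₀ → (u s - u 0) / s ≤ b) : L ≤ b := by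
  have := le_deriv_of_slopes (b := -b) hu.neg ?_
  · linarith
  · intro ε hε
    refine ⟨min (ε / 2) s₀, by positivity, ?_, ?_⟩
    · exact lt_of_le_of_lt (min_le_left _ _) (by linarith)
    · have h1 : 0 < min (ε / 2) s₀ := by positivity
      have := h (min (ε / 2) s₀) h1 (min_le_right _ _)
      have : -((u (min (ε / 2) s₀) - u 0) / (min (ε / 2) s₀)) ≥ -b := by linarith
      calc -b ≤ -((u (min (ε / 2) s₀) - u 0) / min (ε / 2) s₀) := this
        _ = ((fun x => -u x) (min (ε / 2) s₀) - (fun x => -u x) 0) / min (ε / 2) s₀ := by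
            ring
  
end Helpers

namespace S10

lemma hasDerivAt_line {E : Type*} [NormedAddCommGroup E] [NormedSpace ℝ E]
    (ξ₀ η : E) (s : ℝ) : HasDerivAt (fun s : ℝ => ξ₀ + s • η) η s := by
  simpa using ((hasDerivAt_id s).smul_const η).const_add ξ₀

variable [Fintype X] [Fintype Y]

lemma grad_eq {Fs : (X → ℝ) × (Y → ℝ) → ℝ} (hd : Differentiable ℝ Fs)
    {g ξ₀ : (X → ℝ) × (Y → ℝ)} (hg : ∀ ξ, Fs ξ₀ + dotE g (ξ - ξ₀) ≤ Fs ξ)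
    (η : (X → ℝ) × (Y → ℝ)) : dotE g η = fderiv ℝ Fs ξ₀ η := by
  have hline : HasDerivAt (fun s : ℝ => Fs (ξ₀ + s • η)) (fderiv ℝ Fs ξ₀ η) 0 := by
    have h0 : (ξ₀ + (0:ℝ) • η) = ξ₀ := by simp
    have := (hd (ξ₀ + (0:ℝ) • η)).hasFDerivAt.comp_hasDerivAt 0 (hasDerivAt_line ξ₀ η 0)
    rwa [h0] at this
  have hφ : HasDerivAt (fun s : ℝ => Fs (ξ₀ + s • η) - s * dotE g η)
      (fderiv ℝ Fs ξ₀ η - dotE g η) 0 := by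
    simpa using hline.fun_sub ((hasDerivAt_id (0:ℝ)).mul_const (dotE g η))
  have hmin : IsLocalMin (fun s : ℝ => Fs (ξ₀ + s • η) - s * dotE g η) 0 := by
    refine Filter.Eventually.of_forall fun s => ?_
    have := hg (ξ₀ + s • η)
    have h2 : dotE g ((ξ₀ + s • η) - ξ₀) = s * dotE g η := by
      rw [add_sub_cancel_left, dotE_smul]
    simp only [h2] at this
    simp only [zero_smul, add_zero, zero_mul, sub_zero]
    linarith
  have := hmin.hasDerivAt_eq_zero hφ
  linarith

lemma hess_pos {Fs : (X → ℝ) × (Y → ℝ) → ℝ} (hF6 : ContDiff ℝ 2 Fs) (hF5 : H5 Fs)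
    (w₀ : (X → ℝ) × (Y → ℝ)) {η : (X → ℝ) × (Y → ℝ)} (hη : η ≠ 0) :
    0 < fderiv ℝ (fderiv ℝ Fs) w₀ η η := by
  obtain ⟨r, hr, g, lam, hlam, hglob, hloc⟩ := hF5 w₀
  have hd : Differentiable ℝ Fs := hF6.differentiable (by norm_num)
  have hηn : (0:ℝ) < ‖η‖ := norm_pos_iff.2 hη
  have hC1 : ContDiff ℝ 1 (fderiv ℝ Fs) := hF6.fderiv_right (by norm_num)
  set u : ℝ → ℝ := fun s => fderiv ℝ Fs (w₀ + s • η) η with hu_def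
  have hu : HasDerivAt u (fderiv ℝ (fderiv ℝ Fs) w₀ η η) 0 := by
    have h1 : HasFDerivAt (fderiv ℝ Fs) (fderiv ℝ (fderiv ℝ Fs) (w₀ + (0:ℝ) • η)) (w₀ + (0:ℝ) • η) :=
      ((hC1.differentiable (by norm_num)) _).hasFDerivAt
    have h2 := h1.comp_hasDerivAt 0 (hasDerivAt_line w₀ η 0)
    have h3 := h2.clm_apply (hasDerivAt_const (0:ℝ) η)
    simp only [zero_smul, add_zero] at h3 ⊢
    simpa using h3
  have hline : ∀ s : ℝ, HasDerivAt (fun s : ℝ => Fs (w₀ + s • η)) (u s) s := by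
    intro s
    exact (hd _).hasFDerivAt.comp_hasDerivAt s (hasDerivAt_line w₀ η s)
  have hu0 : u 0 = dotE g η := by
    rw [hu_def]
    simp only [zero_smul, add_zero]
    exact (grad_eq hd hglob η).symm
  set s₀ : ℝ := min (r / ‖η‖) 1 with hs₀_def
  have hs₀ : 0 < s₀ := lt_min (by positivity) one_pos
  -- slope lower bound via MVT
  have key : ∀ ε, 0 < ε → ∃ s, 0 < s ∧ s < ε ∧ lam / 2 * ‖η‖ ^ 2 ≤ (u s - u 0) / s := by
    intro ε hε
    set s : ℝ := min ε s₀ / 2 with hs_def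
    have hs : 0 < s := by positivity
    have hss₀ : s ≤ s₀ := by
      have : min ε s₀ ≤ s₀ := min_le_right _ _
      rw [hs_def]; linarith
    have hsε : s < ε := by
      have : min ε s₀ ≤ ε := min_le_left _ _
      rw [hs_def]; linarith
    have hcont : ContinuousOn (fun s : ℝ => Fs (w₀ + s • η)) (Set.Icc 0 s) :=
      (hd.continuous.comp (continuous_const.add (continuous_id.smul continuous_const))).continuousOn
    obtain ⟨cc, hcc, hceq⟩ := exists_hasDerivAt_eq_slope (fun s : ℝ => Fs (w₀ + s • η)) u hs
      hcont (fun x _ => hline x)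
    -- strong convexity inequality at s
    have hnorm : ‖(w₀ + s • η) - w₀‖ = s * ‖η‖ := by
      rw [add_sub_cancel_left, norm_smul, Real.norm_eq_abs, abs_of_pos hs]
    have hle_r : ‖(w₀ + s • η) - w₀‖ ≤ r := by
      rw [hnorm]
      have h1 : s ≤ r / ‖η‖ := le_trans hss₀ (min_le_left _ _)
      calc s * ‖η‖ ≤ (r / ‖η‖) * ‖η‖ := by nlinarith
        _ = r := by field_simp
    have hstrong := hloc (w₀ + s • η) hle_r
    rw [hnorm] at hstrong
    have hdot : dotE g ((w₀ + s • η) - w₀) = s * dotE g η := by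
      rw [add_sub_cancel_left, dotE_smul]
    rw [hdot] at hstrong
    -- slope at c
    have hslope : (Fs (w₀ + s • η) - Fs (w₀ + (0:ℝ) • η)) / (s - 0) = u cc := hceq.symm
    have h00 : (w₀ + (0:ℝ) • η) = w₀ := by simp
    rw [h00, sub_zero] at hslope
    have hucc : u cc = (Fs (w₀ + s • η) - Fs w₀) / s := hslope.symm
    have hucc_ge : u cc ≥ u 0 + lam / 2 * s * ‖η‖ ^ 2 := by
      rw [hucc, hu0, ge_iff_le, le_div_iff₀ hs]
      nlinarith [hstrong]
    refine ⟨cc, hcc.1, lt_trans hcc.2 hsε, ?_⟩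
    rw [le_div_iff₀ hcc.1]
    have hcs : cc < s := hcc.2
    nlinarith [hucc_ge, hcc.1, hcs, mul_pos (half_pos hlam) (pow_pos hηn 2)]
  have hfinal := le_deriv_of_slopes hu key
  calc (0:ℝ) < lam / 2 * ‖η‖ ^ 2 := by positivity
    _ ≤ _ := hfinal

end S10

namespace S10

variable [Fintype X] [Fintype Y]

@[simp] lemma dotE_zero (g : (X → ℝ) × (Y → ℝ)) : dotE g 0 = 0 := by
  simp [dotE]

lemma adjA_add_smul (a d : (X → ℝ) × (Y → ℝ)) (θ : ℝ) (p : X × Y) :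
    adjA (a + θ • d) p = adjA a p + θ * adjA d p := by
  simp [adjA, Prod.add_def, Prod.smul_def]
  ring

lemma Fs_convex_pt {Fs : (X → ℝ) × (Y → ℝ) → ℝ} (hF5 : H5 Fs)
    (a b : (X → ℝ) × (Y → ℝ)) {θ : ℝ} (h0 : 0 ≤ θ) (h1 : θ ≤ 1) :
    Fs (a + θ • (b - a)) ≤ (1 - θ) * Fs a + θ * Fs b := by
  set m := a + θ • (b - a) with hm
  obtain ⟨r, hr, g, lam, hlam, hglob, hloc⟩ := hF5 m
  have ha := hglob a
  have hb := hglob b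
  have hcomb : (1 - θ) * dotE g (a - m) + θ * dotE g (b - m) = 0 := by
    rw [← dotE_smul, ← dotE_smul, ← dotE_add]
    have : (1 - θ) • (a - m) + θ • (b - m) = 0 := by
      rw [hm]; module
    rw [this, dotE_zero]
  nlinarith [ha, hb]

lemma exp_part_convex (c : X × Y → ℝ) {t : ℝ} (ht : 0 < t)
    (a b : (X → ℝ) × (Y → ℝ)) {θ : ℝ} (h0 : 0 ≤ θ) (h1 : θ ≤ 1) :
    (1 / t) * ∑ p, Real.exp (t * (adjA (a + θ • (b - a)) p - c p)) ≤
      (1 - θ) * ((1 / t) * ∑ p, Real.exp (t * (adjA a p - c p)))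
      + θ * ((1 / t) * ∑ p, Real.exp (t * (adjA b p - c p))) := by
  have hsum : ∑ p, Real.exp (t * (adjA (a + θ • (b - a)) p - c p)) ≤
      (1 - θ) * ∑ p, Real.exp (t * (adjA a p - c p))
      + θ * ∑ p, Real.exp (t * (adjA b p - c p)) := by
    rw [Finset.mul_sum, Finset.mul_sum, ← Finset.sum_add_distrib]
    apply Finset.sum_le_sum
    intro p _
    have harg : t * (adjA (a + θ • (b - a)) p - c p)
        = (1 - θ) * (t * (adjA a p - c p)) + θ * (t * (adjA b p - c p)) := by
      rw [adjA_add_smul]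
      have : adjA (b - a) p = adjA b p - adjA a p := by
        simp [adjA, Prod.sub_def]; ring
      rw [this]; ring
    rw [harg]
    have := convexOn_exp.2 (Set.mem_univ (t * (adjA a p - c p)))
      (Set.mem_univ (t * (adjA b p - c p))) (by linarith : (0:ℝ) ≤ 1 - θ) h0 (by ring)
    simpa [smul_eq_mul] using this
  have h1t : 0 ≤ 1 / t := by positivity
  nlinarith [hsum]

lemma KtR_convex {Fs : (X → ℝ) × (Y → ℝ) → ℝ} (hF5 : H5 Fs) (c : X × Y → ℝ)
    {t : ℝ} (ht : 0 < t) (a b : (X → ℝ) × (Y → ℝ)) {θ : ℝ} (h0 : 0 ≤ θ) (h1 : θ ≤ 1) :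
    KtR Fs c t (a + θ • (b - a)) ≤ (1 - θ) * KtR Fs c t a + θ * KtR Fs c t b := by
  have hFs : Fs (-(a + θ • (b - a))) ≤ (1 - θ) * Fs (-a) + θ * Fs (-b) := by
    have : -(a + θ • (b - a)) = (-a) + θ • ((-b) - (-a)) := by module
    rw [this]
    exact Fs_convex_pt hF5 (-a) (-b) h0 h1
  have hE := exp_part_convex c ht a b h0 h1
  simp only [KtR]
  nlinarith [hFs, hE]

lemma min_of_critical {Fs : (X → ℝ) × (Y → ℝ) → ℝ} (hF5 : H5 Fs) (c : X × Y → ℝ)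
    {t : ℝ} (ht : 0 < t) {ξ₁ : (X → ℝ) × (Y → ℝ)}
    (hcrit : HasFDerivAt (KtR Fs c t) (0 : ((X → ℝ) × (Y → ℝ)) →L[ℝ] ℝ) ξ₁)
    (ζ : (X → ℝ) × (Y → ℝ)) : KtR Fs c t ξ₁ ≤ KtR Fs c t ζ := by
  set h : ℝ → ℝ := fun s => KtR Fs c t (ξ₁ + s • (ζ - ξ₁)) with hh
  have hder : HasDerivAt h 0 0 := by
    have h0 : ξ₁ + (0:ℝ) • (ζ - ξ₁) = ξ₁ := by simp
    have := (h0 ▸ hcrit).comp_hasDerivAt 0 (hasDerivAt_line ξ₁ (ζ - ξ₁) 0)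
    exact this
  have hslopes : ∀ s, 0 < s → s ≤ 1 → (h s - h 0) / s ≤ h 1 - h 0 := by
    intro s hs hs1
    have hc := KtR_convex hF5 c ht ξ₁ ζ hs.le hs1
    have h0e : h 0 = KtR Fs c t ξ₁ := by simp [hh]
    have h1e : h 1 = KtR Fs c t ζ := by simp [hh]
    rw [div_le_iff₀ hs]
    have : h s ≤ (1 - s) * KtR Fs c t ξ₁ + s * KtR Fs c t ζ := hc
    rw [h0e, h1e]
    nlinarith [this]
  have := deriv_le_of_slopes hder one_pos hslopes
  have h0e : h 0 = KtR Fs c t ξ₁ := by simp [hh]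
  have h1e : h 1 = KtR Fs c t ζ := by simp [hh]
  rw [h0e, h1e] at this
  linarith

set_option maxHeartbeats 1000000 in
lemma minimizer_unique {Fs : (X → ℝ) × (Y → ℝ) → ℝ} (hF5 : H5 Fs) (c : X × Y → ℝ)
    {t : ℝ} (ht : 0 < t) {ξ₁ ξ₂ : (X → ℝ) × (Y → ℝ)}
    (h₁ : ∀ ζ, KtR Fs c t ξ₁ ≤ KtR Fs c t ζ) (h₂ : ∀ ζ, KtR Fs c t ξ₂ ≤ KtR Fs c t ζ) :
    ξ₁ = ξ₂ := by
  by_contra hne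
  set η : (X → ℝ) × (Y → ℝ) := ξ₂ - ξ₁ with hη_def
  have hη : η ≠ 0 := sub_ne_zero.2 (Ne.symm hne)
  have hηn : (0:ℝ) < ‖η‖ := norm_pos_iff.2 hη
  set mid : (X → ℝ) × (Y → ℝ) := ξ₁ + (1/2 : ℝ) • η with hmid_def
  obtain ⟨r, hr, g, lam, hlam, hglob, hloc⟩ := hF5 (-mid)
  set ε : ℝ := min (r / ‖η‖) (1/2) with hε_def
  have hε : 0 < ε := lt_min (by positivity) (by norm_num)
  have hε2 : ε ≤ 1/2 := min_le_right _ _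
  set ξp : (X → ℝ) × (Y → ℝ) := ξ₁ + (1/2 + ε) • η with hξp_def
  set ξm : (X → ℝ) × (Y → ℝ) := ξ₁ + (1/2 - ε) • η with hξm_def
  set m : ℝ := KtR Fs c t ξ₁ with hm_def
  have hmeq : KtR Fs c t ξ₂ = m := le_antisymm (h₂ ξ₁) (h₁ ξ₂)
  -- ξp, ξm on the segment
  have hconvp : KtR Fs c t ξp ≤ m := by
    have := KtR_convex hF5 c ht ξ₁ ξ₂ (θ := 1/2 + ε) (by linarith) (by linarith)
    have he : ξ₁ + (1/2 + ε) • (ξ₂ - ξ₁) = ξp := rfl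
    rw [he, hmeq] at this
    rw [hm_def]; linarith
  have hconvm : KtR Fs c t ξm ≤ m := by
    have := KtR_convex hF5 c ht ξ₁ ξ₂ (θ := 1/2 - ε) (by linarith) (by linarith)
    have he : ξ₁ + (1/2 - ε) • (ξ₂ - ξ₁) = ξm := rfl
    rw [he, hmeq] at this
    rw [hm_def]; linarith
  -- strong convexity of Fs at -mid
  have hnorm : ∀ s : ℝ, ‖s • η‖ = |s| * ‖η‖ := fun s => by
    rw [norm_smul, Real.norm_eq_abs]
  have hεη_le : ‖ε • η‖ ≤ r := by
    rw [hnorm, abs_of_pos hε]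
    have h1 : ε ≤ r / ‖η‖ := min_le_left _ _
    calc ε * ‖η‖ ≤ (r / ‖η‖) * ‖η‖ := by nlinarith
      _ = r := by field_simp
  have hdiffp : -ξp - (-mid) = (-ε) • η := by
    rw [hξp_def, hmid_def]; module
  have hdiffm : -ξm - (-mid) = ε • η := by
    rw [hξm_def, hmid_def]; module
  have hsp := hloc (-ξp) (by rw [hdiffp, hnorm, abs_neg, abs_of_pos hε, ← abs_of_pos hε, ← hnorm]; exact hεη_le)
  have hsm := hloc (-ξm) (by rw [hdiffm]; exact hεη_le)
  rw [hdiffp] at hsp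
  rw [hdiffm] at hsm
  have hdotp : dotE g ((-ε) • η) = -(ε * dotE g η) := by
    rw [dotE_smul]; ring
  have hdotm : dotE g (ε • η) = ε * dotE g η := dotE_smul _ _ _
  rw [hdotp] at hsp
  rw [hdotm] at hsm
  have hn2 : ‖(-ε) • η‖ ^ 2 = ε^2 * ‖η‖^2 := by
    rw [hnorm, abs_neg, abs_of_pos hε]; ring
  have hn2' : ‖ε • η‖ ^ 2 = ε^2 * ‖η‖^2 := by
    rw [hnorm, abs_of_pos hε]; ring
  rw [hn2] at hsp
  rw [hn2'] at hsm
  -- exp part: midpoint convexity between ξp and ξm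
  have hmidconv := exp_part_convex c ht ξp ξm (θ := 1/2) (by norm_num) (by norm_num)
  have hmide : ξp + (1/2 : ℝ) • (ξm - ξp) = mid := by
    rw [hξp_def, hξm_def, hmid_def]; module
  rw [hmide] at hmidconv
  -- combine
  have hmidmin : m ≤ KtR Fs c t mid := h₁ mid
  have hsum : KtR Fs c t ξp + KtR Fs c t ξm ≥ 2 * KtR Fs c t mid + lam * ε^2 * ‖η‖^2 := by
    simp only [KtR]
    nlinarith [hsp, hsm, hmidconv]
  nlinarith [hconvp, hconvm, hmidmin, hsum, mul_pos (mul_pos hlam (pow_pos hε 2)) (pow_pos hηn 2)]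

end S10

namespace S10

variable [Fintype X] [Fintype Y]

/-- The gradient map of `KtR` in `ξ`, as a function of `(t, ξ)`. -/
def Gfun (Fs : (X → ℝ) × (Y → ℝ) → ℝ) (c : X × Y → ℝ)
    (q : ℝ × ((X → ℝ) × (Y → ℝ))) : ((X → ℝ) × (Y → ℝ)) →L[ℝ] ℝ :=
  (fderiv ℝ Fs (-q.2)).comp (-(ContinuousLinearMap.id ℝ ((X → ℝ) × (Y → ℝ)))) +
  ∑ p, Real.exp (q.1 * (adjA q.2 p - c p)) • Lp p

lemma Gfun_apply (Fs : (X → ℝ) × (Y → ℝ) → ℝ) (c : X × Y → ℝ)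
    (q : ℝ × ((X → ℝ) × (Y → ℝ))) (ζ : (X → ℝ) × (Y → ℝ)) :
    Gfun Fs c q ζ = fderiv ℝ Fs (-q.2) (-ζ)
      + ∑ p, Real.exp (q.1 * (adjA q.2 p - c p)) * adjA ζ p := by
  simp [Gfun, ContinuousLinearMap.sum_apply, Lp_eq_adjA, adjA]

lemma hasFDerivAt_KtR {Fs : (X → ℝ) × (Y → ℝ) → ℝ} (hd : Differentiable ℝ Fs)
    (c : X × Y → ℝ) {t : ℝ} (ht : t ≠ 0) (ξ : (X → ℝ) × (Y → ℝ)) :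
    HasFDerivAt (KtR Fs c t) (Gfun Fs c (t, ξ)) ξ := by
  have hneg : HasFDerivAt (fun ξ : (X → ℝ) × (Y → ℝ) => -ξ)
      (-(ContinuousLinearMap.id ℝ ((X → ℝ) × (Y → ℝ)))) ξ := by
    exact (hasFDerivAt_id ξ).fun_neg
  have h1 : HasFDerivAt (fun ξ : (X → ℝ) × (Y → ℝ) => Fs (-ξ))
      ((fderiv ℝ Fs (-ξ)).comp (-(ContinuousLinearMap.id ℝ ((X → ℝ) × (Y → ℝ))))) ξ :=
    (hd (-ξ)).hasFDerivAt.comp ξ hneg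
  have h2p : ∀ p : X × Y, HasFDerivAt
      (fun ξ : (X → ℝ) × (Y → ℝ) => Real.exp (t * (adjA ξ p - c p)))
      (Real.exp (t * (adjA ξ p - c p)) • (t • Lp p)) ξ := by
    intro p
    have hin : HasFDerivAt (fun ξ : (X → ℝ) × (Y → ℝ) => t * (adjA ξ p - c p)) (t • Lp p) ξ := by
      have := ((Lp p).hasFDerivAt (x := ξ)).sub_const (c p)
      simpa [adjA] using this.const_mul t
    exact hin.exp
  have h2 : HasFDerivAt
      (fun ξ : (X → ℝ) × (Y → ℝ) => (1 / t) * ∑ p, Real.exp (t * (adjA ξ p - c p)))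
      (∑ p, Real.exp (t * (adjA ξ p - c p)) • Lp p) ξ := by
    have hsum := HasFDerivAt.fun_sum (u := Finset.univ) (fun p _ => h2p p)
    have := hsum.const_mul (1 / t)
    refine this.congr_fderiv (Eq.symm ?_)
    rw [Finset.smul_sum]
    apply Finset.sum_congr rfl
    intro p _
    rw [smul_smul, smul_smul]
    congr 1
    field_simp
  have := h1.add h2
  exact this

/-- smoothness of `Gfun` -/
lemma contDiff_Gfun {Fs : (X → ℝ) × (Y → ℝ) → ℝ} (hF6 : ContDiff ℝ 2 Fs)
    (c : X × Y → ℝ) : ContDiff ℝ 1 (Gfun Fs c) := by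
  have h1 : ContDiff ℝ 1 (fderiv ℝ Fs) := hF6.fderiv_right (by norm_num)
  apply ContDiff.add
  · exact ((ContinuousLinearMap.compL ℝ ((X → ℝ) × (Y → ℝ)) ((X → ℝ) × (Y → ℝ)) ℝ).flip
      (-(ContinuousLinearMap.id ℝ ((X → ℝ) × (Y → ℝ))))).contDiff.comp
      (h1.comp contDiff_snd.neg)
  · apply ContDiff.sum
    intro p _
    apply ContDiff.fun_smul _ contDiff_const
    apply Real.contDiff_exp.comp
    exact contDiff_fst.mul (((Lp p).contDiff.comp contDiff_snd).sub contDiff_const)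

/-- The derivative of `Gfun` at `(t₀, ξ₀)`. -/
def DG (Fs : (X → ℝ) × (Y → ℝ) → ℝ) (c : X × Y → ℝ) (t₀ : ℝ) (ξ₀ : (X → ℝ) × (Y → ℝ)) :
    (ℝ × ((X → ℝ) × (Y → ℝ))) →L[ℝ] (((X → ℝ) × (Y → ℝ)) →L[ℝ] ℝ) :=
  ((ContinuousLinearMap.compL ℝ ((X → ℝ) × (Y → ℝ)) ((X → ℝ) × (Y → ℝ)) ℝ).flip
      (-(ContinuousLinearMap.id ℝ ((X → ℝ) × (Y → ℝ))))).comp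
    ((fderiv ℝ (fderiv ℝ Fs) (-ξ₀)).comp (-(ContinuousLinearMap.snd ℝ ℝ ((X → ℝ) × (Y → ℝ))))) +
  ∑ p, (Real.exp (t₀ * (adjA ξ₀ p - c p)) •
        (t₀ • ((Lp p).comp (ContinuousLinearMap.snd ℝ ℝ ((X → ℝ) × (Y → ℝ)))) +
         (adjA ξ₀ p - c p) • ContinuousLinearMap.fst ℝ ℝ ((X → ℝ) × (Y → ℝ)))).smulRight (Lp p)

lemma DG_apply {Fs : (X → ℝ) × (Y → ℝ) → ℝ} (c : X × Y → ℝ) (t₀ : ℝ)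
    (ξ₀ : (X → ℝ) × (Y → ℝ)) (s : ℝ) (η ζ : (X → ℝ) × (Y → ℝ)) :
    DG Fs c t₀ ξ₀ (s, η) ζ = fderiv ℝ (fderiv ℝ Fs) (-ξ₀) η ζ
      + ∑ p, Real.exp (t₀ * (adjA ξ₀ p - c p)) * ((t₀ * adjA η p + (adjA ξ₀ p - c p) * s))
          * adjA ζ p := by
  simp only [DG, ContinuousLinearMap.add_apply, ContinuousLinearMap.sum_apply,
    ContinuousLinearMap.comp_apply, ContinuousLinearMap.flip_apply,
    ContinuousLinearMap.compL_apply, ContinuousLinearMap.smulRight_apply,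
    ContinuousLinearMap.smul_apply, ContinuousLinearMap.neg_apply,
    ContinuousLinearMap.coe_id', id_eq, ContinuousLinearMap.coe_snd',
    ContinuousLinearMap.coe_fst', map_neg, Lp_eq_adjA, smul_eq_mul, adjA]
  congr 1
  simp

lemma hasFDerivAt_Gfun {Fs : (X → ℝ) × (Y → ℝ) → ℝ} (hF6 : ContDiff ℝ 2 Fs)
    (c : X × Y → ℝ) (t₀ : ℝ) (ξ₀ : (X → ℝ) × (Y → ℝ)) :
    HasFDerivAt (Gfun Fs c) (DG Fs c t₀ ξ₀) (t₀, ξ₀) := by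
  have h1 : ContDiff ℝ 1 (fderiv ℝ Fs) := hF6.fderiv_right (by norm_num)
  apply HasFDerivAt.add
  · -- first part
    have hneg : HasFDerivAt (fun q : ℝ × ((X → ℝ) × (Y → ℝ)) => -q.2)
        (-(ContinuousLinearMap.snd ℝ ℝ ((X → ℝ) × (Y → ℝ)))) (t₀, ξ₀) := by
      exact (hasFDerivAt_snd (p := (t₀, ξ₀))).fun_neg
    have hfd : HasFDerivAt (fderiv ℝ Fs) (fderiv ℝ (fderiv ℝ Fs) (-ξ₀)) (-ξ₀) :=
      ((h1.differentiable one_ne_zero) (-ξ₀)).hasFDerivAt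
    have hcomp := hfd.comp (t₀, ξ₀) hneg
    exact (((ContinuousLinearMap.compL ℝ ((X → ℝ) × (Y → ℝ)) ((X → ℝ) × (Y → ℝ)) ℝ).flip
      (-(ContinuousLinearMap.id ℝ ((X → ℝ) × (Y → ℝ))))).hasFDerivAt).comp (t₀, ξ₀) hcomp
  · -- second part
    apply HasFDerivAt.fun_sum
    intro p _
    have hinner : HasFDerivAt (fun q : ℝ × ((X → ℝ) × (Y → ℝ)) => q.1 * (adjA q.2 p - c p))
        (t₀ • ((Lp p).comp (ContinuousLinearMap.snd ℝ ℝ ((X → ℝ) × (Y → ℝ)))) +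
         (adjA ξ₀ p - c p) • ContinuousLinearMap.fst ℝ ℝ ((X → ℝ) × (Y → ℝ))) (t₀, ξ₀) := by
      have hc : HasFDerivAt (fun q : ℝ × ((X → ℝ) × (Y → ℝ)) => q.1)
          (ContinuousLinearMap.fst ℝ ℝ ((X → ℝ) × (Y → ℝ))) (t₀, ξ₀) := hasFDerivAt_fst
      have hdd : HasFDerivAt (fun q : ℝ × ((X → ℝ) × (Y → ℝ)) => adjA q.2 p - c p)
          ((Lp p).comp (ContinuousLinearMap.snd ℝ ℝ ((X → ℝ) × (Y → ℝ)))) (t₀, ξ₀) := by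
        have := ((Lp p).hasFDerivAt (x := ξ₀)).comp (t₀, ξ₀)
          (hasFDerivAt_snd (𝕜 := ℝ) (p := (t₀, ξ₀)))
        simpa [Lp_eq_adjA, adjA] using this.sub_const (c p)
      simpa using hc.fun_mul hdd
    have hexp := hinner.exp
    have hsmul := hexp.fun_smul (hasFDerivAt_const (Lp p) (t₀, ξ₀))
    simpa using hsmul
  
end S10

namespace S10

variable [Fintype X] [Fintype Y]

lemma finrank_eq_CLM :
    Module.finrank ℝ (ℝ × ((X → ℝ) × (Y → ℝ))) =
      Module.finrank ℝ (ℝ × (((X → ℝ) × (Y → ℝ)) →L[ℝ] ℝ)) := by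
  have e1 : (((X → ℝ) × (Y → ℝ)) →ₗ[ℝ] ℝ) ≃ₗ[ℝ] (((X → ℝ) × (Y → ℝ)) →L[ℝ] ℝ) :=
    LinearMap.toContinuousLinearMap
  have hE : Module.finrank ℝ ((((X → ℝ) × (Y → ℝ)) →L[ℝ] ℝ)) =
      Module.finrank ℝ ((X → ℝ) × (Y → ℝ)) :=
    e1.finrank_eq.symm.trans Subspace.dual_finrank_eq
  rw [Module.finrank_prod (M := ℝ) (M' := (X → ℝ) × (Y → ℝ)),
    Module.finrank_prod (M := ℝ) (M' := ((X → ℝ) × (Y → ℝ)) →L[ℝ] ℝ), hE]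

lemma DG_inj {Fs : (X → ℝ) × (Y → ℝ) → ℝ} (hF6 : ContDiff ℝ 2 Fs) (hF5 : H5 Fs)
    (c : X × Y → ℝ) {t : ℝ} (ht : 0 < t) (ξ₀ : (X → ℝ) × (Y → ℝ))
    (z : ℝ × ((X → ℝ) × (Y → ℝ))) (hz1 : z.1 = 0) (hz2 : DG Fs c t ξ₀ z = 0) :
    z = 0 := by
  have hz2' : DG Fs c t ξ₀ (z.1, z.2) z.2 = 0 := by
    rw [Prod.mk.eta, hz2]; rfl
  rw [DG_apply, hz1] at hz2'
  by_cases hη : z.2 = 0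
  · rw [Prod.ext_iff]; exact ⟨hz1, hη⟩
  · exfalso
    have hpos := hess_pos hF6 hF5 (-ξ₀) hη
    have hsumpos : 0 ≤ ∑ p, Real.exp (t * (adjA ξ₀ p - c p)) *
        (t * adjA z.2 p + (adjA ξ₀ p - c p) * 0) * adjA z.2 p := by
      apply Finset.sum_nonneg
      intro p _
      have : Real.exp (t * (adjA ξ₀ p - c p)) * (t * adjA z.2 p + (adjA ξ₀ p - c p) * 0)
          * adjA z.2 p = t * (Real.exp (t * (adjA ξ₀ p - c p)) * adjA z.2 p ^ 2) := by ring
      rw [this]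
      positivity
    linarith

lemma build_equiv {Fs : (X → ℝ) × (Y → ℝ) → ℝ} (hF6 : ContDiff ℝ 2 Fs) (hF5 : H5 Fs)
    (c : X × Y → ℝ) {t : ℝ} (ht : 0 < t) (ξ₀ : (X → ℝ) × (Y → ℝ)) :
    ∃ eqv : (ℝ × ((X → ℝ) × (Y → ℝ))) ≃L[ℝ] (ℝ × (((X → ℝ) × (Y → ℝ)) →L[ℝ] ℝ)),
      (eqv : (ℝ × ((X → ℝ) × (Y → ℝ))) →L[ℝ] (ℝ × (((X → ℝ) × (Y → ℝ)) →L[ℝ] ℝ)))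
        = (ContinuousLinearMap.fst ℝ ℝ ((X → ℝ) × (Y → ℝ))).prod (DG Fs c t ξ₀) := by
  set M := (ContinuousLinearMap.fst ℝ ℝ ((X → ℝ) × (Y → ℝ))).prod (DG Fs c t ξ₀) with hM
  have hinj : Function.Injective M := by
    intro a b hab
    have h0 : M (a - b) = 0 := by rw [map_sub, hab, sub_self]
    have h1 : (a - b).1 = 0 ∧ DG Fs c t ξ₀ (a - b) = 0 := by
      have := Prod.ext_iff.1 h0
      exact ⟨this.1, this.2⟩
    have := DG_inj hF6 hF5 c ht ξ₀ (a - b) h1.1 h1.2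
    exact sub_eq_zero.1 this
  have hsurj : Function.Surjective M :=
    (LinearMap.injective_iff_surjective_of_finrank_eq_finrank finrank_eq_CLM
      (f := (M : (ℝ × ((X → ℝ) × (Y → ℝ))) →ₗ[ℝ] _))).1 hinj
  refine ⟨(LinearEquiv.ofBijective (M : (ℝ × ((X → ℝ) × (Y → ℝ))) →ₗ[ℝ] _)
    ⟨hinj, hsurj⟩).toContinuousLinearEquiv, ?_⟩
  apply ContinuousLinearMap.ext
  intro z
  rfl

end S10

end

set_option maxHeartbeats 1000000

/-- the dual trajectory `ξ(t)` is differentiable and its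
derivative satisfies the ODE
`A diag(γ(t)) A* ξ'(t) + (1/t) ∇²F*(−ξ(t)) ξ'(t) + (1/t²) A(γ(t) ⊙ log γ(t)) = 0`
(stated by pairing with an arbitrary vector `ζ`), where
`γ(t) = exp(t(A*ξ(t) − c))`. -/
theorem statement10 {X Y : Type*} [Fintype X] [Fintype Y] [Nonempty X] [Nonempty Y]
    (c : X × Y → ℝ) (hc : ∀ p, 0 ≤ c p)
    (F : (X → ℝ) × (Y → ℝ) → EReal) (Fs : (X → ℝ) × (Y → ℝ) → ℝ)
    (hF1 : H1 F) (hF2 : H2 F) (hF3 : H3 F) (hF4 : H4 F)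
    (hFs : IsConjOf F Fs) (hF5 : H5 Fs) (hF6 : ContDiff ℝ 2 Fs)
    (xi : ℝ → (X → ℝ) × (Y → ℝ))
    (hxi : ∀ t : ℝ, 0 < t → ∀ ζ, KtR Fs c t (xi t) ≤ KtR Fs c t ζ) :
    ∀ t : ℝ, 0 < t → ∃ v : (X → ℝ) × (Y → ℝ),
      HasDerivAt xi v t ∧
      ∀ ζ : (X → ℝ) × (Y → ℝ),
        dotE (margA (fun p => Real.exp (t * (adjA (xi t) p - c p)) * adjA v p)) ζ
          + (1 / t) * fderiv ℝ (fderiv ℝ Fs) (-(xi t)) v ζ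
          + (1 / t ^ 2) * dotE (margA (fun p =>
              Real.exp (t * (adjA (xi t) p - c p)) *
                Real.log (Real.exp (t * (adjA (xi t) p - c p))))) ζ = 0 := by
  intro t ht
  classical
  have hd : Differentiable ℝ Fs := hF6.differentiable (by norm_num)
  have ht' : t ≠ 0 := ne_of_gt ht
  have hG0 : S10.Gfun Fs c (t, xi t) = 0 := by
    have hmin : IsLocalMin (KtR Fs c t) (xi t) :=
      Filter.Eventually.of_forall (hxi t ht)
    exact hmin.hasFDerivAt_eq_zero (S10.hasFDerivAt_KtR hd c ht' (xi t))
  obtain ⟨eqv, heqv⟩ := S10.build_equiv hF6 hF5 c ht (xi t)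
  have hstrG : HasStrictFDerivAt (S10.Gfun Fs c) (S10.DG Fs c t (xi t)) (t, xi t) := by
    have h1 := ((S10.contDiff_Gfun hF6 c).contDiffAt (x := (t, xi t))).hasStrictFDerivAt one_ne_zero
    rwa [(S10.hasFDerivAt_Gfun hF6 c t (xi t)).fderiv] at h1
  have hstr : HasStrictFDerivAt
      (fun q : ℝ × ((X → ℝ) × (Y → ℝ)) => (q.1, S10.Gfun Fs c q))
      (eqv : (ℝ × ((X → ℝ) × (Y → ℝ))) →L[ℝ] (ℝ × (((X → ℝ) × (Y → ℝ)) →L[ℝ] ℝ)))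
      (t, xi t) := by
    rw [heqv]
    exact ((ContinuousLinearMap.fst ℝ ℝ ((X → ℝ) × (Y → ℝ))).hasStrictFDerivAt).prodMk hstrG
  set Ψ := hstr.localInverse (fun q : ℝ × ((X → ℝ) × (Y → ℝ)) => (q.1, S10.Gfun Fs c q))
    eqv (t, xi t) with hΨdef
  have hΨd := hstr.to_localInverse
  have hri := hstr.eventually_right_inverse
  simp only [hG0] at hΨd hri
  set v : (X → ℝ) × (Y → ℝ) := (eqv.symm ((1 : ℝ), (0 : ((X → ℝ) × (Y → ℝ)) →L[ℝ] ℝ))).2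
    with hv
  -- derivative of ψ
  have hline : HasDerivAt (fun s : ℝ => (s, (0 : ((X → ℝ) × (Y → ℝ)) →L[ℝ] ℝ)))
      ((1 : ℝ), (0 : ((X → ℝ) × (Y → ℝ)) →L[ℝ] ℝ)) t :=
    (hasDerivAt_id t).prodMk (hasDerivAt_const t 0)
  have hΨcomp : HasDerivAt (fun s : ℝ => Ψ (s, 0))
      (eqv.symm ((1 : ℝ), (0 : ((X → ℝ) × (Y → ℝ)) →L[ℝ] ℝ))) t :=
    by have := hΨd.hasFDerivAt.comp_hasDerivAt t hline; exact this
  have hψ : HasDerivAt (fun s : ℝ => (Ψ (s, 0)).2) v t :=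
    (ContinuousLinearMap.snd ℝ ℝ ((X → ℝ) × (Y → ℝ))).hasFDerivAt.comp_hasDerivAt t hΨcomp
  -- eventual identification of xi with ψ
  have htd : Filter.Tendsto (fun s : ℝ => (s, (0 : ((X → ℝ) × (Y → ℝ)) →L[ℝ] ℝ)))
      (nhds t) (nhds (t, (0 : ((X → ℝ) × (Y → ℝ)) →L[ℝ] ℝ))) :=
    (continuous_id.prodMk continuous_const).tendsto t
  have hev : ∀ᶠ s in nhds t, xi s = (Ψ (s, 0)).2 ∧ S10.Gfun Fs c (s, xi s) = 0 := by
    filter_upwards [htd.eventually hri, eventually_gt_nhds ht] with s hs hspos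
    have h1 : (Ψ (s, 0)).1 = s := congrArg Prod.fst hs
    have h2 : S10.Gfun Fs c (Ψ (s, 0)) = 0 := congrArg Prod.snd hs
    have h3 : S10.Gfun Fs c (s, (Ψ (s, 0)).2) = 0 := by
      have he : ((s, (Ψ (s, 0)).2) : ℝ × ((X → ℝ) × (Y → ℝ))) = Ψ (s, 0) :=
        Prod.ext_iff.2 ⟨h1.symm, rfl⟩
      rw [he]
      exact h2
    have hcrit : HasFDerivAt (KtR Fs c s) (0 : ((X → ℝ) × (Y → ℝ)) →L[ℝ] ℝ) ((Ψ (s, 0)).2) := by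
      have := S10.hasFDerivAt_KtR hd c (ne_of_gt hspos) ((Ψ (s, 0)).2)
      rwa [h3] at this
    have hminψ := S10.min_of_critical hF5 c hspos hcrit
    have hxieq : xi s = (Ψ (s, 0)).2 :=
      S10.minimizer_unique hF5 c hspos (hxi s hspos) hminψ
    refine ⟨hxieq, ?_⟩
    rw [hxieq]
    exact h3
  have hxiv : HasDerivAt xi v t := by
    apply hψ.congr_of_eventuallyEq
    filter_upwards [hev] with s hs using hs.1
  refine ⟨v, hxiv, ?_⟩
  -- the ODE
  have hpair : HasDerivAt (fun s : ℝ => (s, xi s)) ((1 : ℝ), v) t :=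
    (hasDerivAt_id t).prodMk hxiv
  have hq : HasDerivAt (fun s : ℝ => S10.Gfun Fs c (s, xi s))
      (S10.DG Fs c t (xi t) ((1 : ℝ), v)) t :=
    by have := (S10.hasFDerivAt_Gfun hF6 c t (xi t)).comp_hasDerivAt t hpair; exact this
  have hq0 : HasDerivAt (fun s : ℝ => S10.Gfun Fs c (s, xi s))
      (0 : ((X → ℝ) × (Y → ℝ)) →L[ℝ] ℝ) t := by
    apply (hasDerivAt_const t (0 : ((X → ℝ) × (Y → ℝ)) →L[ℝ] ℝ)).congr_of_eventuallyEq
    filter_upwards [hev] with s hs using hs.2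
  have hDG0 : S10.DG Fs c t (xi t) ((1 : ℝ), v) = 0 := hq.unique hq0
  intro ζ
  have happ : S10.DG Fs c t (xi t) ((1 : ℝ), v) ζ = 0 := by rw [hDG0]; rfl
  rw [S10.DG_apply] at happ
  rw [S10.dotE_margA, S10.dotE_margA]
  simp only [Real.log_exp]
  have hsplit : ∑ p, Real.exp (t * (adjA (xi t) p - c p))
        * (t * adjA v p + (adjA (xi t) p - c p) * 1) * adjA ζ p
      = t * ∑ p, Real.exp (t * (adjA (xi t) p - c p)) * adjA v p * adjA ζ p
        + (1 / t) * ∑ p, Real.exp (t * (adjA (xi t) p - c p))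
            * (t * (adjA (xi t) p - c p)) * adjA ζ p := by
    rw [Finset.mul_sum, Finset.mul_sum, ← Finset.sum_add_distrib]
    refine Finset.sum_congr rfl fun p _ => ?_
    field_simp
  rw [hsplit] at happ
  set Sv := fderiv ℝ (fderiv ℝ Fs) (-(xi t)) v ζ with hSv
  set A := ∑ p, Real.exp (t * (adjA (xi t) p - c p)) * adjA v p * adjA ζ p with hA
  set C := ∑ p, Real.exp (t * (adjA (xi t) p - c p)) * (t * (adjA (xi t) p - c p)) * adjA ζ p
    with hC
  have hfin : A + 1 / t * Sv + 1 / t ^ 2 * C = (1 / t) * (Sv + (t * A + (1 / t) * C)) := by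
    field_simp
    ring
  rw [hfin, happ, mul_zero]
end

section
/- Assume (H1)–(H6), let ξ* be the unique minimizer of F*(−·) over {ξ : A*ξ ⪯ c}, and write ξ* = (φ*,ψ*). Then the gradient ∇F*(−ξ*) (which exists since under (H1), (H3) and (H6) the conjugate F* is differentiable on all of ℝ^X ⊕ ℝ^Y) belongs to E₀ = span{A e_{x,y} : (x,y) ∈ I₀}, where I₀ = {(x,y) ∈ X×Y : φ*_x + ψ*_y = c(x,y)} and (e_{x,y}) is the canonical basis of ℝ^{X×Y}. -/
open scoped BigOperators
open Filter

noncomputable section Aux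

/-- linear equivalence to Euclidean space -/
def toEuc (X Y : Type*) [Fintype X] [Fintype Y] :
    ((X → ℝ) × (Y → ℝ)) ≃ₗ[ℝ] EuclideanSpace ℝ (X ⊕ Y) where
  toFun v := WithLp.toLp 2 (fun i => Sum.elim v.1 v.2 i)
  invFun f := (fun x => f (Sum.inl x), fun y => f (Sum.inr y))
  map_add' u v := by ext i; cases i <;> rfl
  map_smul' a v := by ext i; cases i <;> rfl
  left_inv v := by cases v; rfl
  right_inv f := by ext i; cases i <;> rfl

lemma inner_toEuc {X Y : Type*} [Fintype X] [Fintype Y] (u v : (X → ℝ) × (Y → ℝ)) :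
    (inner ℝ (toEuc X Y u) (toEuc X Y v) : ℝ) = dotE u v := by
  simp [PiLp.inner_apply, RCLike.inner_apply, dotE, Fintype.sum_sum_type, toEuc, mul_comm]

lemma decompose_vec {X Y : Type*} [Fintype X] [Fintype Y] [DecidableEq X] [DecidableEq Y]
    (v : (X → ℝ) × (Y → ℝ)) :
    v = (∑ x, v.1 x • ((Pi.single x 1 : X → ℝ), (0 : Y → ℝ)))
        + ∑ y, v.2 y • ((0 : X → ℝ), (Pi.single y 1 : Y → ℝ)) := by
  apply Prod.ext <;> simp [Prod.fst_sum, Prod.snd_sum] <;> funext i <;>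
    simp [Finset.sum_apply, Pi.single_apply, mul_ite]

lemma adjA_add_smul {X Y : Type*} (ξ d : (X → ℝ) × (Y → ℝ)) (ε : ℝ) (p : X × Y) :
    adjA (ξ + ε • d) p = adjA ξ p + ε * adjA d p := by
  simp [adjA, Prod.fst_add, Prod.snd_add, Prod.smul_fst, Prod.smul_snd]
  ring

lemma dotE_margA_single {X Y : Type*} [Fintype X] [Fintype Y] [DecidableEq X] [DecidableEq Y]
    (p : X × Y) (d : (X → ℝ) × (Y → ℝ)) :
    dotE (margA (fun p' => if p' = p then (1 : ℝ) else 0)) d = adjA d p := by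
  have h1 : ∀ x : X, (∑ y, if (x, y) = p then (1 : ℝ) else 0)
      = if x = p.1 then 1 else 0 := by
    intro x
    rcases p with ⟨px, py⟩
    simp [Prod.ext_iff]
    by_cases hx : x = px <;> simp [hx, Finset.filter_eq']
  have h2 : ∀ y : Y, (∑ x, if (x, y) = p then (1 : ℝ) else 0)
      = if y = p.2 then 1 else 0 := by
    intro y
    rcases p with ⟨px, py⟩
    simp [Prod.ext_iff]
    by_cases hy : y = py <;> simp [hy, Finset.filter_eq']
  simp only [dotE, margA, h1, h2, ite_mul, one_mul, zero_mul]
  simp [adjA]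

end Aux
/-- the gradient of `F*` at `−ξ*` (represented against the inner
product `dotE`) belongs to `E₀ = span{A e_{x,y} : (x,y) ∈ I₀}`, where `I₀` is
the set of saturated dual constraints. -/
theorem statement13 {X Y : Type*} [Fintype X] [Fintype Y] [Nonempty X] [Nonempty Y]
    [DecidableEq X] [DecidableEq Y]
    (c : X × Y → ℝ) (hc : ∀ p, 0 ≤ c p)
    (F : (X → ℝ) × (Y → ℝ) → EReal) (Fs : (X → ℝ) × (Y → ℝ) → ℝ)
    (hF1 : H1 F) (hF2 : H2 F) (hF3 : H3 F) (hF4 : H4 F)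
    (hFs : IsConjOf F Fs) (hF5 : H5 Fs) (hF6 : ContDiff ℝ 2 Fs)
    (ξs : (X → ℝ) × (Y → ℝ)) (hfeas : ∀ p, adjA ξs p ≤ c p)
    (hopt : ∀ ξ : (X → ℝ) × (Y → ℝ), (∀ p, adjA ξ p ≤ c p) → Fs (-ξs) ≤ Fs (-ξ)) :
    ∃ g : (X → ℝ) × (Y → ℝ),
      (∀ v : (X → ℝ) × (Y → ℝ), fderiv ℝ Fs (-ξs) v = dotE g v) ∧
      g ∈ Submodule.span ℝ
        ((fun p : X × Y => margA (fun p' => if p' = p then (1 : ℝ) else 0)) ''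
          {p : X × Y | adjA ξs p = c p}) := by
  classical
  set L : ((X → ℝ) × (Y → ℝ)) →L[ℝ] ℝ := fderiv ℝ Fs (-ξs) with hL
  have hdiff : Differentiable ℝ Fs := hF6.differentiable (by norm_num)
  -- the representing vector
  set g : (X → ℝ) × (Y → ℝ) :=
    (fun x => L ((Pi.single x 1 : X → ℝ), (0 : Y → ℝ)),
     fun y => L ((0 : X → ℝ), (Pi.single y 1 : Y → ℝ))) with hg
  have hrep : ∀ v : (X → ℝ) × (Y → ℝ), L v = dotE g v := by
    intro v
    conv_lhs => rw [decompose_vec v]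
    rw [map_add, map_sum, map_sum]
    simp only [map_smul, smul_eq_mul]
    simp only [dotE, hg, Finset.sum_add_distrib]
    rw [Finset.sum_congr rfl (fun x _ => mul_comm (v.1 x) _),
        Finset.sum_congr rfl (fun y _ => mul_comm (v.2 y) _)]
  -- key analytic fact: L kills every direction tangent to the active constraints
  have hkey : ∀ d : (X → ℝ) × (Y → ℝ),
      (∀ p : X × Y, adjA ξs p = c p → adjA d p = 0) → L d = 0 := by
    intro d hd
    -- feasibility of ξs + ε • d for small ε
    have hev : ∀ᶠ ε : ℝ in nhds 0, ∀ p : X × Y, adjA (ξs + ε • d) p ≤ c p := by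
      rw [eventually_all]
      intro p
      by_cases h0 : adjA d p = 0
      · filter_upwards with ε
        rw [adjA_add_smul, h0, mul_zero, add_zero]
        exact hfeas p
      · have hstrict : adjA ξs p < c p := by
          rcases lt_or_eq_of_le (hfeas p) with h | h
          · exact h
          · exact absurd (hd p h) h0
        have hcont : Filter.Tendsto (fun ε : ℝ => adjA ξs p + ε * adjA d p)
            (nhds 0) (nhds (adjA ξs p)) := by
          have : Continuous (fun ε : ℝ => adjA ξs p + ε * adjA d p) :=
            continuous_const.add (continuous_id.mul continuous_const)
          have := this.tendsto 0
          simpa using this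
        filter_upwards [hcont.eventually_lt_const hstrict] with ε hε
        rw [adjA_add_smul]
        exact le_of_lt hε
    -- local minimality of ε ↦ Fs (-(ξs + ε • d)) at 0
    have hmin : IsLocalMin (fun ε : ℝ => Fs (-(ξs + ε • d))) 0 := by
      filter_upwards [hev] with ε hε
      have := hopt (ξs + ε • d) hε
      simpa using this
    -- derivative of that map at 0
    have hcurve : HasDerivAt (fun ε : ℝ => -(ξs + ε • d)) (-d) 0 := by
      have h1 : HasDerivAt (fun ε : ℝ => ε • d) ((1 : ℝ) • d) 0 :=
        (hasDerivAt_id 0).smul_const d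
      have h2 : HasDerivAt (fun ε : ℝ => ξs + ε • d) d 0 := by
        simpa using h1.const_add ξs
      exact h2.neg
    have hFd : HasFDerivAt Fs L (-(ξs + (0 : ℝ) • d)) := by
      have : (-(ξs + (0 : ℝ) • d)) = -ξs := by simp
      rw [this]
      exact (hdiff (-ξs)).hasFDerivAt
    have hchain : HasDerivAt (fun ε : ℝ => Fs (-(ξs + ε • d))) (L (-d)) 0 :=
      hFd.comp_hasDerivAt 0 hcurve
    have := hmin.hasDerivAt_eq_zero hchain
    rw [map_neg, neg_eq_zero] at this
    exact this
  refine ⟨g, hrep, ?_⟩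
  -- transport to Euclidean space and use double orthogonal complement
  set S : Set ((X → ℝ) × (Y → ℝ)) :=
    ((fun p : X × Y => margA (fun p' => if p' = p then (1 : ℝ) else 0)) ''
      {p : X × Y | adjA ξs p = c p}) with hS
  set e := toEuc X Y with he
  set K : Submodule ℝ (EuclideanSpace ℝ (X ⊕ Y)) := (Submodule.span ℝ S).map (e : (X → ℝ) × (Y → ℝ) →ₗ[ℝ] EuclideanSpace ℝ (X ⊕ Y)) with hK
  have hgK : e g ∈ Kᗮᗮ := by
    rw [Submodule.mem_orthogonal]
    intro w hw
    rw [Submodule.mem_orthogonal] at hw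
    set d : (X → ℝ) × (Y → ℝ) := e.symm w with hd'
    have hwd : e d = w := e.apply_symm_apply w
    have hdperp : ∀ p : X × Y, adjA ξs p = c p → adjA d p = 0 := by
      intro p hp
      have hmem : margA (fun p' => if p' = p then (1 : ℝ) else 0) ∈ S :=
        ⟨p, hp, rfl⟩
      have hmemK : e (margA (fun p' => if p' = p then (1 : ℝ) else 0)) ∈ K :=
        Submodule.mem_map_of_mem (Submodule.subset_span hmem)
      have := hw _ hmemK
      rw [← hwd, inner_toEuc, dotE_margA_single] at this
      exact this
    have hLd : L d = 0 := hkey d hdperp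
    have hcomm : dotE d g = dotE g d := by
      simp only [dotE]
      rw [Finset.sum_congr rfl (fun x _ => mul_comm (d.1 x) _),
          Finset.sum_congr rfl (fun y _ => mul_comm (d.2 y) _)]
    rw [← hwd, inner_toEuc, hcomm, ← hrep d, hLd]
  rw [Submodule.orthogonal_orthogonal] at hgK
  rw [hK, Submodule.mem_map] at hgK
  obtain ⟨g', hg', hgg'⟩ := hgK
  have : g' = g := e.injective hgg'
  rwa [this] at hg'
end
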